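/- arXiv:1004.0723 — 8 statements merged into one kernel-verified Lean document; each statement's English description precedes it below -/
import Mathlib

section
/- Let Ω be a set and let Σ be a subsemigroup of ℝ₊^Ω containing 0 which is +,−-closed, equipped with the topology induced from the product topology on ℝ^Ω. Let V = {V_s}_{s∈Σ} be a semigroup of isometries on a complex Hilbert space K which is weakly continuous (i.e., s ↦ ⟨V_s x, y⟩ is continuous on Σ for all x,y ∈ K). Then the minimal regular unitary dilation U = {U_s}_{s∈Σ} of V (acting on a Hilbert space L ⊇ K) is strongly continuous, i.e., s ↦ U_s x is continuous for every x ∈ L. -/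
/-!
Since each `U s` is unitary, `‖U s x - U t x‖² = 2‖x‖² - 2 Re ⟪U s x, U t x⟫`, so strong
continuity at `t` follows from continuity of `s ↦ ⟪U s x, U t x⟫`; for the same reason the
weakly continuous isometries `V` are strongly continuous. For `x = ι k`, commutativity and
`s + (t - s)₊ = t + (t - s)₋` give `U(s)* U(t) = U((t - s)₋)* U((t - s)₊)`, so regularity turns
`⟪U s x, U t x⟫` into `⟪V((t - s)₋) k, V((t - s)₊) k⟫`, which is continuous in `s`. The generators
`U((a - b)₋)* U((a - b)₊) (ι k)` of `L` are images of such `ι k` under an operator commuting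
with every `U s`, and the vectors along which `U` is strongly continuous form a submodule that
is closed because the `U s` are uniformly bounded; by minimality it is all of `L`.
-/

open ContinuousLinearMap

/-- For `s : Ω → ℝ`, the positive part `s₊ : j ↦ max (s j) 0`. -/
noncomputable def posPart' {Ω : Type*} (s : Ω → ℝ) : Ω → ℝ := fun j => max (s j) 0

/-- For `s : Ω → ℝ`, the negative part `s₋ = s₊ - s`. -/
noncomputable def negPart' {Ω : Type*} (s : Ω → ℝ) : Ω → ℝ := posPart' s - s

lemma continuous_posPart' {Ω : Type*} : Continuous (posPart' (Ω := Ω)) :=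
  continuous_pi fun j => (continuous_apply j).max continuous_const

lemma continuous_negPart' {Ω : Type*} : Continuous (negPart' (Ω := Ω)) :=
  continuous_posPart'.sub continuous_id

open Filter Topology

theorem tendsto_of_tendsto_inner_of_norm_eq {𝕜 E α : Type*} [RCLike 𝕜] [NormedAddCommGroup E]
    [InnerProductSpace 𝕜 E] {l : Filter α} {f : α → E} {x : E}
    (hnorm : ∀ᶠ s in l, ‖f s‖ = ‖x‖)
    (hinner : Tendsto (fun s => inner 𝕜 (f s) x) l (𝓝 (inner 𝕜 x x))) :
    Tendsto f l (𝓝 x) := by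
  rw [tendsto_iff_norm_sub_tendsto_zero]
  have hre : Tendsto (fun s => 2 * (‖x‖ ^ 2 - RCLike.re (inner 𝕜 (f s) x))) l (𝓝 0) := by
    have h := (RCLike.continuous_re.tendsto _).comp hinner
    rw [inner_self_eq_norm_sq] at h
    have h2 := ((tendsto_const_nhds (x := ‖x‖ ^ 2)).sub h).const_mul 2
    rwa [sub_self, mul_zero] at h2
  have hsqrt := hre.sqrt
  rw [Real.sqrt_zero] at hsqrt
  refine hsqrt.congr' ?_
  filter_upwards [hnorm] with s hs
  rw [← Real.sqrt_sq (norm_nonneg (f s - x)), norm_sub_sq (𝕜 := 𝕜), hs]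
  ring_nf

section ContinuousOnApply

variable {𝕜 α E F : Type*} [NontriviallyNormedField 𝕜] [TopologicalSpace α]
  [NormedAddCommGroup E] [NormedSpace 𝕜 E] [NormedAddCommGroup F] [NormedSpace 𝕜 F]

def continuousOnApplySubmodule (U : α → E →L[𝕜] F) (S : Set α) : Submodule 𝕜 E where
  carrier := {x | ContinuousOn (fun s => U s x) S}
  add_mem' {x y} hx hy := by
    show ContinuousOn (fun s => U s (x + y)) S
    simp only [map_add]
    exact hx.add hy
  zero_mem' := by
    show ContinuousOn (fun s => U s 0) S
    simpa only [map_zero] using continuousOn_const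
  smul_mem' c x hx := by
    show ContinuousOn (fun s => U s (c • x)) S
    simp only [map_smul]
    exact hx.const_smul c

theorem isClosed_continuousOnApplySubmodule {U : α → E →L[𝕜] F} {S : Set α} {C : ℝ}
    (hU : ∀ s ∈ S, ‖U s‖ ≤ C) : IsClosed (continuousOnApplySubmodule U S : Set E) := by
  have hequi : Equicontinuous fun s : S => (U s : E → F) :=
    ((NormedSpace.equicontinuous_TFAE fun s : S => U s).out 5 1).mp
      (⟨C, fun s => hU s s.2⟩ : ∃ C, ∀ s : S, ‖U s‖ ≤ C)
  have hset : (continuousOnApplySubmodule U S : Set E) =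
      ⋂ t : S, {x | Tendsto (fun s : S => U s x) (𝓝 t) (𝓝 (U t x))} := by
    ext x
    rw [Set.mem_iInter]
    exact continuousOn_iff_continuous_domRestrict.trans continuous_iff_continuousAt
  rw [hset]
  exact isClosed_iInter fun t => hequi.isClosed_setOfPred_tendsto (U t).continuous

end ContinuousOnApply

section Unitary

variable {R : Type*} [Monoid R] [StarMul R]

theorem Commute.star_left_of_mem_unitary {u x : R} (hu : u ∈ unitary R) (h : Commute u x) :
    Commute (star u) x :=
  calc star u * x = star u * (x * u) * star u := by
        rw [mul_assoc, mul_assoc, Unitary.mul_star_self_of_mem hu, mul_one]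
    _ = x * star u := by
        rw [← h.eq, ← mul_assoc, Unitary.star_mul_self_of_mem hu, one_mul]

theorem star_mul_eq_star_mul_of_mul_eq {a b c d : R} (ha : a ∈ unitary R) (hc : c ∈ unitary R)
    (hcd : Commute c d) (h : b * c = a * d) : star a * b = star c * d :=
  calc star a * b = star a * (b * c) * star c := by
        rw [mul_assoc, mul_assoc, Unitary.mul_star_self_of_mem hc, mul_one]
    _ = d * star c := by rw [h, ← mul_assoc, Unitary.star_mul_self_of_mem ha, one_mul]
    _ = star c * d := (hcd.star_left_of_mem_unitary hc).eq.symm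

theorem star_mul_eq_star_negPart'_mul_posPart' {Ω : Type*} {Sig : Set (Ω → ℝ)}
    {U : (Ω → ℝ) → R} (hU : ∀ a ∈ Sig, ∀ b ∈ Sig, U (a + b) = U a * U b)
    (hunit : ∀ s ∈ Sig, U s ∈ unitary R) {s t : Ω → ℝ} (hs : s ∈ Sig) (ht : t ∈ Sig)
    (hp : posPart' (t - s) ∈ Sig) (hn : negPart' (t - s) ∈ Sig) :
    star (U s) * U t = star (U (negPart' (t - s))) * U (posPart' (t - s)) := by
  have hsum : t + negPart' (t - s) = s + posPart' (t - s) := by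
    funext j
    simp only [negPart', Pi.add_apply, Pi.sub_apply]
    ring
  refine star_mul_eq_star_mul_of_mul_eq (hunit s hs) (hunit _ hn) ?_ ?_
  · rw [commute_iff_eq, ← hU _ hn _ hp, ← hU _ hp _ hn, add_comm]
  · rw [← hU _ ht _ hn, ← hU _ hs _ hp, hsum]

end Unitary

section RegularDilation

variable {Ω K L : Type*} [NormedAddCommGroup K] [InnerProductSpace ℂ K] [CompleteSpace K]
  [NormedAddCommGroup L] [InnerProductSpace ℂ L] [CompleteSpace L]
  {Sig : Set (Ω → ℝ)} {V : (Ω → ℝ) → K →L[ℂ] K} {U : (Ω → ℝ) → L →L[ℂ] L} {ι : K →L[ℂ] L}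

theorem inner_apply_eq_inner_negPart'_posPart'_of_regular
    (hpm : ∀ a ∈ Sig, ∀ b ∈ Sig, posPart' (a - b) ∈ Sig ∧ negPart' (a - b) ∈ Sig)
    (hUsg : ∀ a ∈ Sig, ∀ b ∈ Sig, U (a + b) = U a ∘L U b)
    (hunit : ∀ s ∈ Sig, U s ∈ unitary (L →L[ℂ] L))
    (hreg : ∀ a ∈ Sig, ∀ b ∈ Sig,
      adjoint ι ∘L (adjoint (U (negPart' (a - b))) ∘L U (posPart' (a - b))) ∘L ι
        = adjoint (V (negPart' (a - b))) ∘L V (posPart' (a - b)))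
    {s t : Ω → ℝ} (hs : s ∈ Sig) (ht : t ∈ Sig) (k : K) :
    inner ℂ (U s (ι k)) (U t (ι k)) =
      inner ℂ (V (negPart' (t - s)) k) (V (posPart' (t - s)) k) := by
  obtain ⟨hp, hn⟩ := hpm t ht s hs
  calc inner ℂ (U s (ι k)) (U t (ι k))
      = inner ℂ (ι k) ((star (U s) * U t) (ι k)) := (adjoint_inner_right _ _ _).symm
    _ = inner ℂ k ((adjoint ι ∘L (adjoint (U (negPart' (t - s))) ∘L
          U (posPart' (t - s))) ∘L ι) k) := by
        rw [star_mul_eq_star_negPart'_mul_posPart' hUsg hunit hs ht hp hn,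
          ← adjoint_inner_right]
        rfl
    _ = inner ℂ (V (negPart' (t - s)) k) (V (posPart' (t - s)) k) := by
        rw [hreg t ht s hs, comp_apply, adjoint_inner_right]

theorem continuousOn_apply_of_regular
    (hpm : ∀ a ∈ Sig, ∀ b ∈ Sig, posPart' (a - b) ∈ Sig ∧ negPart' (a - b) ∈ Sig)
    (hVcont : ∀ k, ContinuousOn (fun s => V s k) Sig)
    (hUsg : ∀ a ∈ Sig, ∀ b ∈ Sig, U (a + b) = U a ∘L U b)
    (hunit : ∀ s ∈ Sig, U s ∈ unitary (L →L[ℂ] L))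
    (hreg : ∀ a ∈ Sig, ∀ b ∈ Sig,
      adjoint ι ∘L (adjoint (U (negPart' (a - b))) ∘L U (posPart' (a - b))) ∘L ι
        = adjoint (V (negPart' (a - b))) ∘L V (posPart' (a - b)))
    (k : K) : ContinuousOn (fun s => U s (ι k)) Sig := by
  intro t ht
  have hcont : ContinuousOn
      (fun s => inner ℂ (V (negPart' (t - s)) k) (V (posPart' (t - s)) k)) Sig :=
    ((hVcont k).comp (continuous_negPart'.comp (continuous_const.sub continuous_id)).continuousOn
      fun s hs => (hpm t ht s hs).2).inner
    ((hVcont k).comp (continuous_posPart'.comp (continuous_const.sub continuous_id)).continuousOn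
      fun s hs => (hpm t ht s hs).1)
  refine tendsto_of_tendsto_inner_of_norm_eq (eventually_nhdsWithin_of_forall fun s hs => ?_)
    ((hcont.congr fun s hs =>
      inner_apply_eq_inner_negPart'_posPart'_of_regular hpm hUsg hunit hreg hs ht k) t ht)
  rw [norm_map_of_mem_unitary (hunit s hs), norm_map_of_mem_unitary (hunit t ht)]

theorem continuousOn_apply_star_mul_apply_of_regular
    (hpm : ∀ a ∈ Sig, ∀ b ∈ Sig, posPart' (a - b) ∈ Sig ∧ negPart' (a - b) ∈ Sig)
    (hVcont : ∀ k, ContinuousOn (fun s => V s k) Sig)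
    (hUsg : ∀ a ∈ Sig, ∀ b ∈ Sig, U (a + b) = U a ∘L U b)
    (hunit : ∀ s ∈ Sig, U s ∈ unitary (L →L[ℂ] L))
    (hreg : ∀ a ∈ Sig, ∀ b ∈ Sig,
      adjoint ι ∘L (adjoint (U (negPart' (a - b))) ∘L U (posPart' (a - b))) ∘L ι
        = adjoint (V (negPart' (a - b))) ∘L V (posPart' (a - b)))
    {p n : Ω → ℝ} (hp : p ∈ Sig) (hn : n ∈ Sig) (k : K) :
    ContinuousOn (fun s => U s (adjoint (U n) (U p (ι k)))) Sig := by
  have hcomm : ∀ a ∈ Sig, ∀ b ∈ Sig, Commute (U a) (U b) := fun a ha b hb => by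
    rw [commute_iff_eq, mul_def, mul_def, ← hUsg a ha b hb, ← hUsg b hb a ha, add_comm]
  refine ((star (U n) * U p).continuous.comp_continuousOn
    (continuousOn_apply_of_regular hpm hVcont hUsg hunit hreg k)).congr fun s hs => ?_
  have hW : Commute (U s) (star (U n) * U p) :=
    ((hcomm n hn s hs).star_left_of_mem_unitary (hunit n hn)).symm.mul_right (hcomm s hs p hp)
  exact DFunLike.congr_fun hW.eq (ι k)

end RegularDilation

theorem minimal_regular_unitary_dilation_of_weakly_continuous_is_strongly_continuous_general
    {Ω : Type} {K : Type} [NormedAddCommGroup K] [InnerProductSpace ℂ K]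
    [CompleteSpace K]
    {L : Type} [NormedAddCommGroup L] [InnerProductSpace ℂ L] [CompleteSpace L]
    (Sig : Set (Ω → ℝ))
    (hpm : ∀ a ∈ Sig, ∀ b ∈ Sig, posPart' (a - b) ∈ Sig ∧ negPart' (a - b) ∈ Sig)
    -- `V` is a semigroup of isometries on `K` over `Sig`
    (V : (Ω → ℝ) → K →L[ℂ] K)
    (hViso : ∀ s ∈ Sig, ∀ x : K, ‖V s x‖ = ‖x‖)
    -- `V` is weakly continuous on `Sig` (product topology on `Ω → ℝ`)
    (hVweak : ∀ x y : K, ContinuousOn (fun s : Ω → ℝ => (inner ℂ (V s x) y : ℂ)) Sig)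
    -- `U` is a minimal regular unitary dilation of `V` on `L ⊇ K`
    (ι : K →L[ℂ] L)
    (U : (Ω → ℝ) → L →L[ℂ] L)
    (hUsg : ∀ a ∈ Sig, ∀ b ∈ Sig, U (a + b) = U a ∘L U b)
    (hUun : ∀ s ∈ Sig, U s ∘L adjoint (U s) = 1 ∧ adjoint (U s) ∘L U s = 1)
    (hreg : ∀ a ∈ Sig, ∀ b ∈ Sig,
      adjoint ι ∘L (adjoint (U (negPart' (a - b))) ∘L U (posPart' (a - b))) ∘L ι
        = adjoint (V (negPart' (a - b))) ∘L V (posPart' (a - b)))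
    (hmin : (Submodule.span ℂ {x : L | ∃ a ∈ Sig, ∃ b ∈ Sig, ∃ k : K,
        x = adjoint (U (negPart' (a - b)))
              (U (posPart' (a - b)) (ι k))}).topologicalClosure = ⊤) :
    -- then `U` is strongly continuous on `Sig`
    ∀ x : L, ContinuousOn (fun s : Ω → ℝ => U s x) Sig := by
  have hunit : ∀ s ∈ Sig, U s ∈ unitary (L →L[ℂ] L) := fun s hs =>
    ⟨(hUun s hs).2, (hUun s hs).1⟩
  have hVcont : ∀ k, ContinuousOn (fun s => V s k) Sig := fun k t ht =>
    tendsto_of_tendsto_inner_of_norm_eq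
      (eventually_nhdsWithin_of_forall fun s hs => by rw [hViso s hs, hViso t ht])
      (hVweak k (V t k) t ht)
  have hbound : ∀ s ∈ Sig, ‖U s‖ ≤ 1 := fun s hs =>
    opNorm_le_bound _ zero_le_one fun x => by rw [norm_map_of_mem_unitary (hunit s hs), one_mul]
  intro x
  refine Submodule.topologicalClosure_minimal _ (Submodule.span_le.2 ?_)
    (isClosed_continuousOnApplySubmodule hbound) (hmin ▸ Submodule.mem_top : x ∈ _)
  rintro _ ⟨a, ha, b, hb, k, rfl⟩
  exact continuousOn_apply_star_mul_apply_of_regular hpm hVcont hUsg hunit hreg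
    (hpm a ha b hb).1 (hpm a ha b hb).2 k

/-- If a semigroup of isometries `V` over a `+,-`-closed subsemigroup `Sig ⊆ ℝ₊^Ω`
(with the topology induced from the product topology on `ℝ^Ω`) is weakly continuous,
then its minimal regular unitary dilation `U` is strongly continuous. -/
theorem minimal_regular_unitary_dilation_of_weakly_continuous_is_strongly_continuous
    {Ω : Type} {K : Type} [NormedAddCommGroup K] [InnerProductSpace ℂ K]
    [CompleteSpace K]
    {L : Type} [NormedAddCommGroup L] [InnerProductSpace ℂ L] [CompleteSpace L]
    (Sig : Set (Ω → ℝ))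
    (hnn : ∀ s ∈ Sig, ∀ j : Ω, 0 ≤ s j)
    (h0 : (0 : Ω → ℝ) ∈ Sig)
    (hadd : ∀ a ∈ Sig, ∀ b ∈ Sig, a + b ∈ Sig)
    (hpm : ∀ a ∈ Sig, ∀ b ∈ Sig, posPart' (a - b) ∈ Sig ∧ negPart' (a - b) ∈ Sig)
    -- `V` is a semigroup of isometries on `K` over `Sig`
    (V : (Ω → ℝ) → K →L[ℂ] K)
    (hV0 : V 0 = 1)
    (hVsg : ∀ a ∈ Sig, ∀ b ∈ Sig, V (a + b) = V a ∘L V b)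
    (hViso : ∀ s ∈ Sig, ∀ x : K, ‖V s x‖ = ‖x‖)
    -- `V` is weakly continuous on `Sig` (product topology on `Ω → ℝ`)
    (hVweak : ∀ x y : K, ContinuousOn (fun s : Ω → ℝ => (inner ℂ (V s x) y : ℂ)) Sig)
    -- `U` is a minimal regular unitary dilation of `V` on `L ⊇ K`
    (ι : K →L[ℂ] L) (hι : ∀ x : K, ‖ι x‖ = ‖x‖)
    (U : (Ω → ℝ) → L →L[ℂ] L)
    (hU0 : U 0 = 1)
    (hUsg : ∀ a ∈ Sig, ∀ b ∈ Sig, U (a + b) = U a ∘L U b)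
    (hUun : ∀ s ∈ Sig, U s ∘L adjoint (U s) = 1 ∧ adjoint (U s) ∘L U s = 1)
    (hreg : ∀ a ∈ Sig, ∀ b ∈ Sig,
      adjoint ι ∘L (adjoint (U (negPart' (a - b))) ∘L U (posPart' (a - b))) ∘L ι
        = adjoint (V (negPart' (a - b))) ∘L V (posPart' (a - b)))
    (hmin : (Submodule.span ℂ {x : L | ∃ a ∈ Sig, ∃ b ∈ Sig, ∃ k : K,
        x = adjoint (U (negPart' (a - b)))
              (U (posPart' (a - b)) (ι k))}).topologicalClosure = ⊤) :
    -- then `U` is strongly continuous on `Sig`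
    ∀ x : L, ContinuousOn (fun s : Ω → ℝ => U s x) Sig :=
  minimal_regular_unitary_dilation_of_weakly_continuous_is_strongly_continuous_general Sig hpm V
    hViso hVweak ι U hUsg hUun hreg hmin
end

section
/- Let Ω be a set and let Σ be a subsemigroup of ℝ₊^Ω containing 0 which is +,−-closed, and let T = {T_s}_{s∈Σ} be a semigroup of contractions on a complex Hilbert space H (T_0 = I, T_s T_t = T_{s+t}, ‖T_s‖ ≤ 1). If T has a regular isometric dilation, then T has a regular unitary dilation. -/
/-!
Adjoin formal inverses to the commuting isometries `W s`: a pair `(s, x)` is read as `W s⁻¹ x`.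
On such pairs `W s` acts by `(a, x) ↦ (a, W s x)` with inverse `(a, x) ↦ (a * s, x)`, and
`⟪(s, x), (t, y)⟫ := ⟪W t x, W s y⟫` is a well-defined inner product because the `W s` commute
and preserve inner products. The completion of this pre-Hilbert space carries commuting unitaries
extending the `W s` along the isometric embedding `x ↦ (1, x)`; since they extend the isometries,
the compressions `ι* U_{s₋}* U_{s₊} ι` and `ι* W_{s₋}* W_{s₊} ι` agree, so regularity is inherited.
-/

open ContinuousLinearMap

open UniformSpace

universe u v

namespace LinearIsometryEquiv

variable {𝕜 E F : Type*} [NormedField 𝕜] [NormedAddCommGroup E] [NormedSpace 𝕜 E]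
  [NormedAddCommGroup F] [NormedSpace 𝕜 F]

noncomputable def completion (e : E ≃ₗᵢ[𝕜] F) : Completion E ≃ₗᵢ[𝕜] Completion F where
  __ := (e : E →L[𝕜] F).completion
  invFun := (e.symm : F →L[𝕜] E).completion
  left_inv x := by
    induction x using Completion.induction_on with
    | hp => exact isClosed_eq ((e.symm : F →L[𝕜] E).completion.continuous.comp
        (e : E →L[𝕜] F).completion.continuous) continuous_id
    | ih x => simp
  right_inv x := by
    induction x using Completion.induction_on with
    | hp => exact isClosed_eq ((e : E →L[𝕜] F).completion.continuous.comp
        (e.symm : F →L[𝕜] E).completion.continuous) continuous_id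
    | ih x => simp
  norm_map' x := by
    induction x using Completion.induction_on with
    | hp =>
      exact isClosed_eq (continuous_norm.comp (e : E →L[𝕜] F).completion.continuous) (by fun_prop)
    | ih x => simp

@[simp]
theorem completion_coe (e : E ≃ₗᵢ[𝕜] F) (x : E) : e.completion x = e x := by
  simp [completion]

noncomputable def completionHom : (E ≃ₗᵢ[𝕜] E) →* (Completion E ≃ₗᵢ[𝕜] Completion E) where
  toFun := completion
  map_one' := by
    ext x
    induction x using Completion.induction_on with
    | hp => exact isClosed_eq (by fun_prop) continuous_id
    | ih x => simp
  map_mul' e e' := by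
    ext x
    induction x using Completion.induction_on with
    | hp => exact isClosed_eq (by fun_prop) (by fun_prop)
    | ih x => simp

@[simp]
theorem completionHom_apply (e : E ≃ₗᵢ[𝕜] E) : completionHom e = e.completion := rfl

end LinearIsometryEquiv

section IsometryLimit

variable {M : Type u} {K : Type v} [CommMonoid M] [NormedAddCommGroup K] [InnerProductSpace ℂ K]
  (W : M →* (K →ₗᵢ[ℂ] K))

/-- `(s, x)` stands for `W s⁻¹ x`, which is why it is identified with `(s * c, W c x)`. -/
def IsometryLimit.Rel (p q : M × K) : Prop := ∃ c, q = (p.1 * c, W c p.2)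

def IsometryLimit : Type (max u v) := Quot (IsometryLimit.Rel W)

noncomputable section

open scoped InnerProductSpace

namespace IsometryLimit

def mk (s : M) (x : K) : IsometryLimit W := Quot.mk _ (s, x)

variable {W}

theorem map_one_apply (x : K) : W 1 x = x := by
  rw [map_one, LinearIsometry.coe_one, id]

theorem map_mul_apply (a b : M) (x : K) : W (a * b) x = W a (W b x) := by
  rw [map_mul, LinearIsometry.coe_mul, Function.comp_apply]

theorem apply_comm (a b : M) (x : K) : W a (W b x) = W b (W a x) := by
  rw [← map_mul_apply, ← map_mul_apply, mul_comm]

theorem mk_mul_apply (s c : M) (x : K) : mk W (s * c) (W c x) = mk W s x :=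
  (Quot.sound ⟨c, rfl⟩).symm

@[elab_as_elim]
theorem ind {motive : IsometryLimit W → Prop} (h : ∀ s x, motive (mk W s x))
    (q : IsometryLimit W) : motive q :=
  Quot.ind (fun p => h p.1 p.2) q

instance : Zero (IsometryLimit W) := ⟨mk W 1 0⟩

instance : Add (IsometryLimit W) where
  add := Quot.lift₂ (fun p q => mk W (p.1 * q.1) (W q.1 p.2 + W p.1 q.2))
    (by
      rintro ⟨s, x⟩ ⟨t, y⟩ _ ⟨c, rfl⟩
      rw [← mk_mul_apply _ c]
      simp only [map_add, ← map_mul_apply, mul_comm, mul_left_comm])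
    (by
      rintro ⟨s, x⟩ _ ⟨t, y⟩ ⟨c, rfl⟩
      rw [← mk_mul_apply _ c]
      simp only [map_add, ← map_mul_apply, mul_comm, mul_left_comm])

instance : Neg (IsometryLimit W) where
  neg := Quot.lift (fun p => mk W p.1 (-p.2)) (by
    rintro ⟨s, x⟩ _ ⟨c, rfl⟩
    rw [← mk_mul_apply _ c, map_neg])

instance : SMul ℂ (IsometryLimit W) where
  smul a := Quot.lift (fun p => mk W p.1 (a • p.2)) (by
    rintro ⟨s, x⟩ _ ⟨c, rfl⟩
    rw [← mk_mul_apply _ c, LinearIsometry.map_smul])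

theorem zero_def : (0 : IsometryLimit W) = mk W 1 0 := rfl

theorem mk_add_mk (s t : M) (x y : K) : mk W s x + mk W t y = mk W (s * t) (W t x + W s y) := rfl

theorem neg_mk (s : M) (x : K) : -mk W s x = mk W s (-x) := rfl

theorem smul_mk (a : ℂ) (s : M) (x : K) : a • mk W s x = mk W s (a • x) := rfl

theorem mk_zero (s : M) : mk W s 0 = 0 := by
  rw [zero_def, ← mk_mul_apply 1 s, map_zero, one_mul]

instance : AddCommGroup (IsometryLimit W) where
  add_assoc := ind fun s x => ind fun t y => ind fun u z => by
    simp only [mk_add_mk, map_add, ← map_mul_apply, add_assoc, mul_comm, mul_left_comm]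
  zero_add := ind fun s x => by
    rw [zero_def, mk_add_mk, map_zero, zero_add, one_mul, map_one_apply]
  add_zero := ind fun s x => by
    rw [zero_def, mk_add_mk, map_zero, add_zero, mul_one, map_one_apply]
  add_comm := ind fun s x => ind fun t y => by
    rw [mk_add_mk, mk_add_mk, add_comm, mul_comm]
  neg_add_cancel := ind fun s x => by
    rw [neg_mk, mk_add_mk, map_neg, neg_add_cancel, mk_zero]
  nsmul := nsmulRec
  zsmul := zsmulRec

instance : Module ℂ (IsometryLimit W) where
  one_smul := ind fun s x => by rw [smul_mk, one_smul]
  mul_smul a b := ind fun s x => by rw [smul_mk, smul_mk, smul_mk, mul_smul]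
  smul_zero a := by rw [zero_def, smul_mk, smul_zero]
  smul_add a := ind fun s x => ind fun t y => by
    simp only [mk_add_mk, smul_mk, smul_add, LinearIsometry.map_smul]
  add_smul a b := ind fun s x => by
    rw [smul_mk, smul_mk, smul_mk, mk_add_mk, ← mk_mul_apply s s, add_smul, map_add]
  zero_smul := ind fun s x => by rw [smul_mk, zero_smul, mk_zero]

abbrev innerCore : InnerProductSpace.Core ℂ (IsometryLimit W) where
  inner := Quot.lift₂ (fun p q => ⟪W q.1 p.2, W p.1 q.2⟫_ℂ)
    (by
      rintro ⟨s, x⟩ ⟨t, y⟩ _ ⟨c, rfl⟩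
      rw [← (W c).inner_map_map]
      simp only [← map_mul_apply, mul_comm])
    (by
      rintro ⟨s, x⟩ _ ⟨t, y⟩ ⟨c, rfl⟩
      rw [← (W c).inner_map_map]
      simp only [← map_mul_apply, mul_comm])
  conj_inner_symm := ind fun s x => ind fun t y => inner_conj_symm _ _
  re_inner_nonneg := ind fun s x => inner_self_nonneg (𝕜 := ℂ)
  definite := ind fun s x h => by
    have hx : W s x = 0 := inner_self_eq_zero.mp h
    rw [(map_eq_zero_iff _ (W s).injective).mp hx, mk_zero]
  add_left := ind fun s x => ind fun t y => ind fun u z => by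
    change ⟪W u (W t x + W s y), W (s * t) z⟫_ℂ = ⟪W u x, W s z⟫_ℂ + ⟪W u y, W t z⟫_ℂ
    rw [map_add, inner_add_left, ← (W t).inner_map_map (W u x), ← (W s).inner_map_map (W u y)]
    simp only [← map_mul_apply, mul_comm]
  smul_left := ind fun s x => ind fun t y a => by
    change ⟪W t (a • x), W s y⟫_ℂ = _ * ⟪W t x, W s y⟫_ℂ
    rw [LinearIsometry.map_smul, inner_smul_left]

instance : NormedAddCommGroup (IsometryLimit W) := innerCore.toNormedAddCommGroup

instance : InnerProductSpace ℂ (IsometryLimit W) := InnerProductSpace.ofCore innerCore.toCore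

theorem inner_mk_mk (s t : M) (x y : K) : ⟪mk W s x, mk W t y⟫_ℂ = ⟪W t x, W s y⟫_ℂ := rfl

variable (W) in
def embedding : K →ₗᵢ[ℂ] IsometryLimit W :=
  LinearMap.isometryOfInner
    { toFun := mk W 1
      map_add' x y := by rw [mk_add_mk, mul_one, map_one_apply, map_one_apply]
      map_smul' a x := (smul_mk a 1 x).symm }
    (fun x y => by
      change ⟪mk W 1 x, mk W 1 y⟫_ℂ = ⟪x, y⟫_ℂ
      rw [inner_mk_mk, map_one_apply, map_one_apply])

def shiftₗ (s : M) : IsometryLimit W →ₗ[ℂ] IsometryLimit W where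
  toFun := Quot.lift (fun p => mk W p.1 (W s p.2)) (by
    rintro ⟨a, x⟩ _ ⟨c, rfl⟩
    rw [← mk_mul_apply _ c, apply_comm])
  map_add' := ind fun a x => ind fun b y => by
    change mk W (a * b) (W s (W b x + W a y)) = mk W (a * b) (W b (W s x) + W a (W s y))
    rw [map_add, apply_comm s, apply_comm s]
  map_smul' c := ind fun a x => by
    change mk W a (W s (c • x)) = c • mk W a (W s x)
    rw [LinearIsometry.map_smul, smul_mk]

theorem shiftₗ_mk (s a : M) (x : K) : shiftₗ s (mk W a x) = mk W a (W s x) := rfl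

theorem inner_shiftₗ (s : M) (q r : IsometryLimit W) :
    ⟪shiftₗ s q, shiftₗ s r⟫_ℂ = ⟪q, r⟫_ℂ := by
  induction q using ind
  induction r using ind
  rw [shiftₗ_mk, shiftₗ_mk, inner_mk_mk, inner_mk_mk, apply_comm _ s, apply_comm _ s,
    LinearIsometry.inner_map_map]

theorem shiftₗ_surjective (s : M) : Function.Surjective (shiftₗ (W := W) s) :=
  ind fun a x => ⟨mk W (a * s) x, mk_mul_apply a s x⟩

variable (W) in
def shift : M →* (IsometryLimit W ≃ₗᵢ[ℂ] IsometryLimit W) where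
  toFun s := .ofSurjective ((shiftₗ s).isometryOfInner (inner_shiftₗ s)) (shiftₗ_surjective s)
  map_one' := LinearIsometryEquiv.ext <| ind fun a x => by
    change mk W a (W 1 x) = mk W a x
    rw [map_one_apply]
  map_mul' s t := LinearIsometryEquiv.ext <| ind fun a x => by
    change mk W a (W (s * t) x) = mk W a (W s (W t x))
    rw [map_mul_apply]

theorem shift_embedding (s : M) (x : K) : shift W s (embedding W x) = embedding W (W s x) := rfl

end IsometryLimit

end

theorem MonoidHom.exists_unitary_extension :
    ∃ (L : Type (max u v)) (_ : NormedAddCommGroup L) (_ : InnerProductSpace ℂ L)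
      (_ : CompleteSpace L) (J : K →ₗᵢ[ℂ] L) (U : M →* unitary (L →L[ℂ] L)),
      ∀ s x, (U s : L →L[ℂ] L) (J x) = J (W s x) :=
  ⟨Completion (IsometryLimit W), _, _, _,
    Completion.toComplₗᵢ.comp (IsometryLimit.embedding W),
    Unitary.linearIsometryEquiv.symm.toMonoidHom.comp
      (LinearIsometryEquiv.completionHom.comp (IsometryLimit.shift W)),
    fun s x => by simp [IsometryLimit.shift_embedding]⟩

end IsometryLimit

theorem AddSubmonoid.exists_unitary_extension {A : Type u} {K : Type v} [AddCommMonoid A]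
    [NormedAddCommGroup K] [InnerProductSpace ℂ K] (S : AddSubmonoid A) (W : A → K →L[ℂ] K)
    (hW0 : W 0 = 1) (hWadd : ∀ a ∈ S, ∀ b ∈ S, W (a + b) = W a ∘L W b)
    (hWiso : ∀ s ∈ S, ∀ x, ‖W s x‖ = ‖x‖) :
    ∃ (L : Type (max u v)) (_ : NormedAddCommGroup L) (_ : InnerProductSpace ℂ L)
      (_ : CompleteSpace L) (J : K →ₗᵢ[ℂ] L) (U : A → L →L[ℂ] L),
      U 0 = 1 ∧ (∀ a ∈ S, ∀ b ∈ S, U (a + b) = U a ∘L U b) ∧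
      (∀ s ∈ S, U s ∈ unitary (L →L[ℂ] L)) ∧ ∀ s ∈ S, ∀ x, U s (J x) = J (W s x) := by
  classical
  let W' : Multiplicative S →* (K →ₗᵢ[ℂ] K) :=
    { toFun s := ⟨W s.toAdd, hWiso _ s.toAdd.2⟩
      map_one' := LinearIsometry.ext fun x => by simp [hW0]
      map_mul' s t := LinearIsometry.ext fun x => by simp [hWadd _ s.toAdd.2 _ t.toAdd.2] }
  obtain ⟨L, _, _, _, J, U, hUJ⟩ := W'.exists_unitary_extension
  refine ⟨L, ‹_›, ‹_›, ‹_›, J, fun a => if h : a ∈ S then U (.ofAdd ⟨a, h⟩) else 1,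
    ?_, fun a ha b hb => ?_, fun s hs => ?_, fun s hs x => ?_⟩
  · simp only [dif_pos S.zero_mem]
    exact congrArg Subtype.val (map_one U)
  · simp only [dif_pos ha, dif_pos hb, dif_pos (S.add_mem ha hb)]
    exact congrArg Subtype.val (map_mul U (.ofAdd ⟨a, ha⟩) (.ofAdd ⟨b, hb⟩))
  · simp only [dif_pos hs]
    exact (U _).2
  · simp only [dif_pos hs]
    exact hUJ _ x

theorem LinearIsometry.adjoint_comp_adjoint_comp_comp_of_semiconj {H K L : Type*}
    [NormedAddCommGroup H] [InnerProductSpace ℂ H] [CompleteSpace H]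
    [NormedAddCommGroup K] [InnerProductSpace ℂ K] [CompleteSpace K]
    [NormedAddCommGroup L] [InnerProductSpace ℂ L] [CompleteSpace L]
    (J : K →ₗᵢ[ℂ] L) (ι : H →L[ℂ] K) {U₁ U₂ : L →L[ℂ] L} {W₁ W₂ : K →L[ℂ] K}
    (h₁ : Function.Semiconj J W₁ U₁) (h₂ : Function.Semiconj J W₂ U₂) :
    adjoint (J.toContinuousLinearMap ∘L ι) ∘L (adjoint U₁ ∘L U₂) ∘L (J.toContinuousLinearMap ∘L ι)
      = adjoint ι ∘L (adjoint W₁ ∘L W₂) ∘L ι := by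
  ext h
  refine ext_inner_right ℂ fun h' => ?_
  simp only [comp_apply, adjoint_inner_left, LinearIsometry.coe_toContinuousLinearMap, ← h₁.eq,
    ← h₂.eq, LinearIsometry.inner_map_map]

theorem regular_isometric_dilation_implies_regular_unitary_dilation_general
    {Ω : Type} {H : Type} [NormedAddCommGroup H] [InnerProductSpace ℂ H]
    [CompleteSpace H]
    (Sig : Set (Ω → ℝ))
    (h0 : (0 : Ω → ℝ) ∈ Sig)
    (hadd : ∀ a ∈ Sig, ∀ b ∈ Sig, a + b ∈ Sig)
    (hpm : ∀ a ∈ Sig, ∀ b ∈ Sig, posPart' (a - b) ∈ Sig ∧ negPart' (a - b) ∈ Sig)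
    -- `T` is a semigroup of contractions on `H` over `Sig`
    (T : (Ω → ℝ) → H →L[ℂ] H)
    -- `T` has a regular isometric dilation
    (hisodil : ∃ (K : Type) (_ : NormedAddCommGroup K) (_ : InnerProductSpace ℂ K)
      (_ : CompleteSpace K) (ι : H →L[ℂ] K) (W : (Ω → ℝ) → K →L[ℂ] K),
      (∀ h : H, ‖ι h‖ = ‖h‖) ∧
      W 0 = 1 ∧
      (∀ a ∈ Sig, ∀ b ∈ Sig, W (a + b) = W a ∘L W b) ∧
      (∀ s ∈ Sig, ∀ x : K, ‖W s x‖ = ‖x‖) ∧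
      (∀ a ∈ Sig, ∀ b ∈ Sig,
        adjoint ι ∘L (adjoint (W (negPart' (a - b))) ∘L W (posPart' (a - b))) ∘L ι
          = adjoint (T (negPart' (a - b))) ∘L T (posPart' (a - b)))) :
    -- then `T` has a regular unitary dilation
    ∃ (K : Type) (_ : NormedAddCommGroup K) (_ : InnerProductSpace ℂ K)
      (_ : CompleteSpace K) (ι : H →L[ℂ] K) (U : (Ω → ℝ) → K →L[ℂ] K),
      (∀ h : H, ‖ι h‖ = ‖h‖) ∧
      U 0 = 1 ∧
      (∀ a ∈ Sig, ∀ b ∈ Sig, U (a + b) = U a ∘L U b) ∧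
      (∀ s ∈ Sig, U s ∘L adjoint (U s) = 1 ∧ adjoint (U s) ∘L U s = 1) ∧
      (∀ a ∈ Sig, ∀ b ∈ Sig,
        adjoint ι ∘L (adjoint (U (negPart' (a - b))) ∘L U (posPart' (a - b))) ∘L ι
          = adjoint (T (negPart' (a - b))) ∘L T (posPart' (a - b))) := by
  obtain ⟨K, _, _, _, ι, W, hι, hW0, hWadd, hWiso, hreg⟩ := hisodil
  let S : AddSubmonoid (Ω → ℝ) :=
    { carrier := Sig, add_mem' := fun ha hb => hadd _ ha _ hb, zero_mem' := h0 }
  obtain ⟨L, _, _, _, J, U, hU0, hUadd, hUunit, hUJ⟩ := S.exists_unitary_extension W hW0 hWadd hWiso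
  refine ⟨L, ‹_›, ‹_›, ‹_›, J.toContinuousLinearMap ∘L ι, U, fun h => (J.norm_map _).trans (hι h),
    hU0, hUadd, fun s hs => ?_, fun a ha b hb => ?_⟩
  · rw [← star_eq_adjoint, ← mul_def, ← mul_def]
    exact ⟨Unitary.mul_star_self_of_mem (hUunit s hs), Unitary.star_mul_self_of_mem (hUunit s hs)⟩
  · obtain ⟨hpos, hneg⟩ := hpm a ha b hb
    rw [← hreg a ha b hb]
    exact J.adjoint_comp_adjoint_comp_comp_of_semiconj ι (fun x => (hUJ _ hneg x).symm)
      (fun x => (hUJ _ hpos x).symm)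

/-- If a semigroup of contractions `T` over a `+,-`-closed unital subsemigroup
`Sig ⊆ ℝ₊^Ω` has a regular isometric dilation, then it has a regular unitary
dilation. -/
theorem regular_isometric_dilation_implies_regular_unitary_dilation
    {Ω : Type} {H : Type} [NormedAddCommGroup H] [InnerProductSpace ℂ H]
    [CompleteSpace H]
    (Sig : Set (Ω → ℝ))
    (hnn : ∀ s ∈ Sig, ∀ j : Ω, 0 ≤ s j)
    (h0 : (0 : Ω → ℝ) ∈ Sig)
    (hadd : ∀ a ∈ Sig, ∀ b ∈ Sig, a + b ∈ Sig)
    (hpm : ∀ a ∈ Sig, ∀ b ∈ Sig, posPart' (a - b) ∈ Sig ∧ negPart' (a - b) ∈ Sig)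
    -- `T` is a semigroup of contractions on `H` over `Sig`
    (T : (Ω → ℝ) → H →L[ℂ] H)
    (hT0 : T 0 = 1)
    (hTsg : ∀ a ∈ Sig, ∀ b ∈ Sig, T (a + b) = T a ∘L T b)
    (hTcontr : ∀ s ∈ Sig, ‖T s‖ ≤ 1)
    -- `T` has a regular isometric dilation
    (hisodil : ∃ (K : Type) (_ : NormedAddCommGroup K) (_ : InnerProductSpace ℂ K)
      (_ : CompleteSpace K) (ι : H →L[ℂ] K) (W : (Ω → ℝ) → K →L[ℂ] K),
      (∀ h : H, ‖ι h‖ = ‖h‖) ∧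
      W 0 = 1 ∧
      (∀ a ∈ Sig, ∀ b ∈ Sig, W (a + b) = W a ∘L W b) ∧
      (∀ s ∈ Sig, ∀ x : K, ‖W s x‖ = ‖x‖) ∧
      (∀ a ∈ Sig, ∀ b ∈ Sig,
        adjoint ι ∘L (adjoint (W (negPart' (a - b))) ∘L W (posPart' (a - b))) ∘L ι
          = adjoint (T (negPart' (a - b))) ∘L T (posPart' (a - b)))) :
    -- then `T` has a regular unitary dilation
    ∃ (K : Type) (_ : NormedAddCommGroup K) (_ : InnerProductSpace ℂ K)
      (_ : CompleteSpace K) (ι : H →L[ℂ] K) (U : (Ω → ℝ) → K →L[ℂ] K),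
      (∀ h : H, ‖ι h‖ = ‖h‖) ∧
      U 0 = 1 ∧
      (∀ a ∈ Sig, ∀ b ∈ Sig, U (a + b) = U a ∘L U b) ∧
      (∀ s ∈ Sig, U s ∘L adjoint (U s) = 1 ∧ adjoint (U s) ∘L U s = 1) ∧
      (∀ a ∈ Sig, ∀ b ∈ Sig,
        adjoint ι ∘L (adjoint (U (negPart' (a - b))) ∘L U (posPart' (a - b))) ∘L ι
          = adjoint (T (negPart' (a - b))) ∘L T (posPart' (a - b))) :=
  regular_isometric_dilation_implies_regular_unitary_dilation_general Sig h0 hadd hpm T hisodil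
end

section
/- Let Ω be a set and let Σ be a subsemigroup of ℝ₊^Ω containing 0 which is +,−-closed, and let T = {T_s}_{s∈Σ} be a semigroup of contractions on a complex Hilbert space H. Suppose U = {U_s}_{s∈Σ} is a regular unitary dilation of T acting on a Hilbert space L ⊇ H which is minimal, i.e., L is the closed linear span of {U_{s₋}* U_{s₊} h : s ∈ Σ − Σ, h ∈ H}. Let K be the closed linear span of {U_s h : s ∈ Σ, h ∈ H} and set V_s := U_s|_K for s ∈ Σ. Then each V_s is an isometry of K into K, V = {V_s}_{s∈Σ} is a semigroup (V_0 = I, V_s V_t = V_{s+t}), and V is a regular isometric dilation of T. -/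
/-!
The subspace `K = ⋁_{s ∈ Sig} U_s H` is invariant under every `U_s`, because
`U_s U_t H = U_{s+t} H`, so `V_s := U_s|_K` is defined. It inherits the semigroup law and
isometry from `U`, and since `H ⊆ K` the inner products `⟪V_{s₊} h, V_{s₋} g⟫` are those of `U`,
which regularity of `U` identifies with `⟪T_{s₊} h, T_{s₋} g⟫`.
-/

open ContinuousLinearMap

/-- The closed subspace `K = ⋁_{s ∈ Sig} U_s H` of the dilation space `L`. -/
noncomputable def dilSpan {Ω H L : Type} [NormedAddCommGroup H] [InnerProductSpace ℂ H]
    [NormedAddCommGroup L] [InnerProductSpace ℂ L]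
    (Sig : Set (Ω → ℝ)) (ι : H →L[ℂ] L) (U : (Ω → ℝ) → L →L[ℂ] L) : Submodule ℂ L :=
  (Submodule.span ℂ {x : L | ∃ s ∈ Sig, ∃ h : H, x = U s (ι h)}).topologicalClosure

open Set

section Restrict

variable {R M : Type*} [Ring R] [TopologicalSpace M] [AddCommGroup M] [Module R M]

/-- The restriction of `f` to `p` when `p` is `f`-invariant, and the identity of `p` otherwise. -/
noncomputable def ContinuousLinearMap.restrictInvariant (f : M →L[R] M) (p : Submodule R M) :
    p →L[R] p :=
  open Classical in if h : ∀ x ∈ p, f x ∈ p then f.restrict h else 1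

theorem ContinuousLinearMap.coe_restrictInvariant_apply {f : M →L[R] M} {p : Submodule R M}
    (hf : ∀ x ∈ p, f x ∈ p) (x : p) : (f.restrictInvariant p x : M) = f x := by
  rw [restrictInvariant, dif_pos hf, coe_restrict_apply]

end Restrict

theorem Submodule.mapsTo_topologicalClosure_span {R M N : Type*} [Ring R] [TopologicalSpace M]
    [AddCommGroup M] [Module R M] [IsTopologicalAddGroup M] [ContinuousConstSMul R M]
    [TopologicalSpace N] [AddCommGroup N] [Module R N] [IsTopologicalAddGroup N]
    [ContinuousConstSMul R N] {f : M →L[R] N} {s : Set M} {t : Set N} (hf : MapsTo f s t) :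
    MapsTo f (span R s).topologicalClosure (span R t).topologicalClosure := by
  have hspan : span R s ≤ (span R t).comap (f : M →ₗ[R] N) :=
    span_le.2 fun _ hx ↦ subset_span (hf hx)
  simpa only [topologicalClosure_coe] using
    MapsTo.closure (f := f) (fun _ hx ↦ hspan hx) f.continuous

theorem ContinuousLinearMap.inner_map_map_eq_of_adjoint_comp_eq {𝕜 E F G : Type*} [RCLike 𝕜]
    [NormedAddCommGroup E] [InnerProductSpace 𝕜 E] [CompleteSpace E]
    [NormedAddCommGroup F] [InnerProductSpace 𝕜 F] [CompleteSpace F]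
    [NormedAddCommGroup G] [InnerProductSpace 𝕜 G] [CompleteSpace G]
    {ι : E →L[𝕜] F} {A B : F →L[𝕜] F} {C D : E →L[𝕜] G}
    (h : adjoint ι ∘L (adjoint B ∘L A) ∘L ι = adjoint D ∘L C) (x y : E) :
    inner 𝕜 (A (ι x)) (B (ι y)) = inner 𝕜 (C x) (D y) := by
  calc inner 𝕜 (A (ι x)) (B (ι y))
      = inner 𝕜 ((adjoint ι ∘L (adjoint B ∘L A) ∘L ι) x) y := by
        simp only [comp_apply, adjoint_inner_left]
    _ = inner 𝕜 (C x) (D y) := by rw [h, comp_apply, adjoint_inner_left]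

section DilSpan

variable {Ω H L : Type} [NormedAddCommGroup H] [InnerProductSpace ℂ H]
  [NormedAddCommGroup L] [InnerProductSpace ℂ L]
  {Sig : Set (Ω → ℝ)} {ι : H →L[ℂ] L} {U : (Ω → ℝ) → L →L[ℂ] L}

theorem apply_mem_dilSpan {s : Ω → ℝ} (hs : s ∈ Sig) (h : H) : U s (ι h) ∈ dilSpan Sig ι U :=
  Submodule.le_topologicalClosure _ (Submodule.subset_span ⟨s, hs, h, rfl⟩)

theorem embedding_mem_dilSpan (h0 : 0 ∈ Sig) (hU0 : U 0 = 1) (h : H) :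
    ι h ∈ dilSpan Sig ι U := by
  simpa [hU0] using apply_mem_dilSpan (U := U) h0 h

theorem mapsTo_dilSpan (hadd : ∀ a ∈ Sig, ∀ b ∈ Sig, a + b ∈ Sig)
    (hUsg : ∀ a ∈ Sig, ∀ b ∈ Sig, U (a + b) = U a ∘L U b) :
    ∀ s ∈ Sig, ∀ x ∈ dilSpan Sig ι U, U s x ∈ dilSpan Sig ι U := by
  intro s hs
  refine Submodule.mapsTo_topologicalClosure_span ?_
  rintro _ ⟨t, ht, h, rfl⟩
  exact ⟨s + t, hadd s hs t ht, h, by rw [hUsg s hs t ht, comp_apply]⟩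

end DilSpan

theorem restriction_of_minimal_regular_unitary_dilation_is_regular_isometric_dilation_general
    {Ω : Type} {H : Type} [NormedAddCommGroup H] [InnerProductSpace ℂ H]
    [CompleteSpace H]
    {L : Type} [NormedAddCommGroup L] [InnerProductSpace ℂ L] [CompleteSpace L]
    (Sig : Set (Ω → ℝ))
    (h0 : (0 : Ω → ℝ) ∈ Sig)
    (hadd : ∀ a ∈ Sig, ∀ b ∈ Sig, a + b ∈ Sig)
    (hpm : ∀ a ∈ Sig, ∀ b ∈ Sig, posPart' (a - b) ∈ Sig ∧ negPart' (a - b) ∈ Sig)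
    -- `T` is a semigroup of contractions on `H` over `Sig`
    (T : (Ω → ℝ) → H →L[ℂ] H)
    -- `U` is a minimal regular unitary dilation of `T` on `L ⊇ H`
    (ι : H →L[ℂ] L)
    (U : (Ω → ℝ) → L →L[ℂ] L)
    (hU0 : U 0 = 1)
    (hUsg : ∀ a ∈ Sig, ∀ b ∈ Sig, U (a + b) = U a ∘L U b)
    (hUun : ∀ s ∈ Sig, U s ∘L adjoint (U s) = 1 ∧ adjoint (U s) ∘L U s = 1)
    (hreg : ∀ a ∈ Sig, ∀ b ∈ Sig,
      adjoint ι ∘L (adjoint (U (negPart' (a - b))) ∘L U (posPart' (a - b))) ∘L ι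
        = adjoint (T (negPart' (a - b))) ∘L T (posPart' (a - b))) :
    -- `H` sits inside `K := ⋁_{s ∈ Sig} U_s H`
    (∀ h : H, ι h ∈ dilSpan Sig ι U) ∧
    -- `K` is invariant under each `U_s`, `s ∈ Sig`
    (∀ s ∈ Sig, ∀ x ∈ dilSpan Sig ι U, U s x ∈ dilSpan Sig ι U) ∧
    -- the restrictions `V_s := U_s|_K` form a regular isometric dilation of `T`
    ∃ (V : (Ω → ℝ) → (dilSpan Sig ι U →L[ℂ] dilSpan Sig ι U))
      (ι' : H →L[ℂ] dilSpan Sig ι U),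
      -- `ι'` is the embedding of `H` into `K` induced by `ι`
      (∀ h : H, (ι' h : L) = ι h) ∧
      -- `V_s` is the restriction of `U_s` to `K`
      (∀ s ∈ Sig, ∀ x : dilSpan Sig ι U, (V s x : L) = U s x) ∧
      -- `V` is a semigroup of isometries
      V 0 = 1 ∧
      (∀ a ∈ Sig, ∀ b ∈ Sig, V (a + b) = V a ∘L V b) ∧
      (∀ s ∈ Sig, ∀ x : dilSpan Sig ι U, ‖V s x‖ = ‖x‖) ∧
      -- `V` is a regular dilation of `T`:
      -- `⟨V_{s₊} h, V_{s₋} g⟩ = ⟨T_{s₊} h, T_{s₋} g⟩`, i.e. `P_H V_{s₋}* V_{s₊}|_H = T_{s₋}* T_{s₊}`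
      (∀ a ∈ Sig, ∀ b ∈ Sig, ∀ g h : H,
        (inner ℂ (V (posPart' (a - b)) (ι' h)) (V (negPart' (a - b)) (ι' g)) : ℂ)
          = (inner ℂ (T (posPart' (a - b)) h) (T (negPart' (a - b)) g) : ℂ)) := by
  have hK := mapsTo_dilSpan (ι := ι) hadd hUsg
  have hV {s} (hs : s ∈ Sig) (x : dilSpan Sig ι U) :
      ((U s).restrictInvariant (dilSpan Sig ι U) x : L) = U s x :=
    coe_restrictInvariant_apply (hK s hs) x
  have hH := embedding_mem_dilSpan (ι := ι) h0 hU0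
  refine ⟨hH, hK, fun s ↦ (U s).restrictInvariant _, ι.codRestrict _ hH,
    fun _ ↦ rfl, fun s hs ↦ hV hs, ?_, ?_, ?_, ?_⟩
  · ext x
    rw [hV h0, hU0]
    rfl
  · intro a ha b hb
    ext x
    rw [hV (hadd a ha b hb), comp_apply, hV ha, hV hb, hUsg a ha b hb]
    rfl
  · intro s hs x
    rw [← Submodule.norm_coe, hV hs, ← Submodule.norm_coe]
    exact (U s).norm_map_iff_adjoint_comp_self.2 (hUun s hs).2 x
  · intro a ha b hb g h
    rw [Submodule.coe_inner, hV (hpm a ha b hb).1, hV (hpm a ha b hb).2]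
    exact inner_map_map_eq_of_adjoint_comp_eq (hreg a ha b hb) h g

/-- **From a minimal regular unitary dilation to a regular isometric dilation.**
If `U` on `L ⊇ H` is a minimal regular unitary dilation of a semigroup of contractions
`T` over a `+,-`-closed subsemigroup `Sig ⊆ ℝ₊^Ω`, then, with
`K := ⋁_{s ∈ Sig} U_s H` and `V_s := U_s|_K`, each `V_s` is an isometry of `K` into
`K`, `V` is a semigroup, and `V` is a regular isometric dilation of `T`. -/
theorem restriction_of_minimal_regular_unitary_dilation_is_regular_isometric_dilation
    {Ω : Type} {H : Type} [NormedAddCommGroup H] [InnerProductSpace ℂ H]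
    [CompleteSpace H]
    {L : Type} [NormedAddCommGroup L] [InnerProductSpace ℂ L] [CompleteSpace L]
    (Sig : Set (Ω → ℝ))
    (hnn : ∀ s ∈ Sig, ∀ j : Ω, 0 ≤ s j)
    (h0 : (0 : Ω → ℝ) ∈ Sig)
    (hadd : ∀ a ∈ Sig, ∀ b ∈ Sig, a + b ∈ Sig)
    (hpm : ∀ a ∈ Sig, ∀ b ∈ Sig, posPart' (a - b) ∈ Sig ∧ negPart' (a - b) ∈ Sig)
    -- `T` is a semigroup of contractions on `H` over `Sig`
    (T : (Ω → ℝ) → H →L[ℂ] H)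
    (hT0 : T 0 = 1)
    (hTsg : ∀ a ∈ Sig, ∀ b ∈ Sig, T (a + b) = T a ∘L T b)
    (hTcontr : ∀ s ∈ Sig, ‖T s‖ ≤ 1)
    -- `U` is a minimal regular unitary dilation of `T` on `L ⊇ H`
    (ι : H →L[ℂ] L) (hι : ∀ h : H, ‖ι h‖ = ‖h‖)
    (U : (Ω → ℝ) → L →L[ℂ] L)
    (hU0 : U 0 = 1)
    (hUsg : ∀ a ∈ Sig, ∀ b ∈ Sig, U (a + b) = U a ∘L U b)
    (hUun : ∀ s ∈ Sig, U s ∘L adjoint (U s) = 1 ∧ adjoint (U s) ∘L U s = 1)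
    (hreg : ∀ a ∈ Sig, ∀ b ∈ Sig,
      adjoint ι ∘L (adjoint (U (negPart' (a - b))) ∘L U (posPart' (a - b))) ∘L ι
        = adjoint (T (negPart' (a - b))) ∘L T (posPart' (a - b)))
    (hmin : (Submodule.span ℂ {x : L | ∃ a ∈ Sig, ∃ b ∈ Sig, ∃ h : H,
        x = adjoint (U (negPart' (a - b)))
              (U (posPart' (a - b)) (ι h))}).topologicalClosure = ⊤) :
    -- `H` sits inside `K := ⋁_{s ∈ Sig} U_s H`
    (∀ h : H, ι h ∈ dilSpan Sig ι U) ∧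
    -- `K` is invariant under each `U_s`, `s ∈ Sig`
    (∀ s ∈ Sig, ∀ x ∈ dilSpan Sig ι U, U s x ∈ dilSpan Sig ι U) ∧
    -- the restrictions `V_s := U_s|_K` form a regular isometric dilation of `T`
    ∃ (V : (Ω → ℝ) → (dilSpan Sig ι U →L[ℂ] dilSpan Sig ι U))
      (ι' : H →L[ℂ] dilSpan Sig ι U),
      -- `ι'` is the embedding of `H` into `K` induced by `ι`
      (∀ h : H, (ι' h : L) = ι h) ∧
      -- `V_s` is the restriction of `U_s` to `K`
      (∀ s ∈ Sig, ∀ x : dilSpan Sig ι U, (V s x : L) = U s x) ∧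
      -- `V` is a semigroup of isometries
      V 0 = 1 ∧
      (∀ a ∈ Sig, ∀ b ∈ Sig, V (a + b) = V a ∘L V b) ∧
      (∀ s ∈ Sig, ∀ x : dilSpan Sig ι U, ‖V s x‖ = ‖x‖) ∧
      -- `V` is a regular dilation of `T`:
      -- `⟨V_{s₊} h, V_{s₋} g⟩ = ⟨T_{s₊} h, T_{s₋} g⟩`, i.e. `P_H V_{s₋}* V_{s₊}|_H = T_{s₋}* T_{s₊}`
      (∀ a ∈ Sig, ∀ b ∈ Sig, ∀ g h : H,
        (inner ℂ (V (posPart' (a - b)) (ι' h)) (V (negPart' (a - b)) (ι' g)) : ℂ)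
          = (inner ℂ (T (posPart' (a - b)) h) (T (negPart' (a - b)) g) : ℂ)) :=
  restriction_of_minimal_regular_unitary_dilation_is_regular_isometric_dilation_general Sig h0 hadd
    hpm T ι U hU0 hUsg hUun hreg
end

section
/- Let Ω be a set, for each i ∈ Ω let S_i be a commensurable unital subsemigroup of ℝ₊, and let S be the semigroup of all finitely supported functions s : Ω → ℝ₊ with s(j) ∈ S_j for all j. Let T = {T_s}_{s∈S} be a semigroup of contractions on a complex Hilbert space H. If T has a regular unitary dilation, then for every finite subset v ⊆ Ω and every s ∈ S, the operator ∑_{u⊆v} (−1)^{|u|} T_{s[u]}* T_{s[u]} is positive semidefinite. -/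
open ContinuousLinearMap

/-- A subset of `ℝ` is a commensurable unital subsemigroup of `ℝ₊` if it contains `0`,
is closed under addition, consists of nonnegative reals, and any finitely many of its
elements are natural multiples of a common element. -/
def IsCommensurableSubsemigroup (A : Set ℝ) : Prop :=
  0 ∈ A ∧ (∀ x ∈ A, ∀ y ∈ A, x + y ∈ A) ∧ (∀ x ∈ A, 0 ≤ x) ∧
    ∀ (N : ℕ) (f : Fin N → ℝ), (∀ k, f k ∈ A) →
      ∃ s₀ ∈ A, ∃ a : Fin N → ℕ, ∀ k, f k = (a k : ℝ) * s₀

/-- The semigroup `S = Σᵢ Sᵢ` of finitely supported functions `s : Ω → ℝ` with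
`s j ∈ S j` for every `j`. -/
def SumSemigroup {Ω : Type*} (S : Ω → Set ℝ) : Set (Ω → ℝ) :=
  {s | (Function.support s).Finite ∧ ∀ j, s j ∈ S j}

/-- `s[u]`: the function agreeing with `s` on the finite set `u` and vanishing off `u`. -/
def restrFun {Ω : Type*} [DecidableEq Ω] (s : Ω → ℝ) (u : Finset Ω) : Ω → ℝ :=
  fun j => if j ∈ u then s j else 0

/-!
Write `T_u = T_{s[u]}` and `U_u = U_{s[u]}`. For disjoint `u, w` these are multiplicative, and
regularity says `P_H U_q* U_p = T_q* T_p` on `H` for disjoint `p, q`. Since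
`U_u U_w* = U_{w∖u}* U_{u∖w}`, the vectors `U_u* T_u h` satisfy
`⟨U_u* T_u h, U_w* T_w h⟩ = ‖T_{u∪w} h‖²`. So for `Z = ∑_{u⊆v} (-1)^{|u|} U_u* T_u : H → K`,
`Z* Z = ∑_{u,w⊆v} (-1)^{|u|+|w|} T_{u∪w}* T_{u∪w}`, and by inclusion–exclusion this is the
alternating sum `∑_{r⊆v} (-1)^{|r|} T_r* T_r`: a point of `r = u ∪ w` lies in `u` only, in `w`
only, or in both, contributing the factor `-1 - 1 + 1 = -1`.
-/

theorem Finset.sum_powerset_sum_powerset_neg_one_pow_smul_union {α R M : Type*} [DecidableEq α]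
    [Ring R] [AddCommGroup M] [Module R M] (v : Finset α) (g : Finset α → M) :
    ∑ u ∈ v.powerset, ∑ w ∈ v.powerset, ((-1 : R) ^ (u.card + w.card)) • g (u ∪ w)
      = ∑ r ∈ v.powerset, ((-1 : R) ^ r.card) • g r := by
  induction v using Finset.induction_on generalizing g with
  | empty => simp
  | insert a v ha ih =>
    have sign : ∀ u ∈ v.powerset, (-1 : R) ^ (insert a u).card = -(-1) ^ u.card := fun u hu => by
      rw [Finset.card_insert_of_notMem fun h => ha (Finset.mem_powerset.mp hu h), pow_succ,
        mul_neg_one]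
    -- After splitting both powersets at `a`, each side for `insert a v` is `F g - F (g ∘ insert a)`
    -- with `F` the same side for `v`.
    simp only [Finset.sum_powerset_insert ha, Finset.sum_add_distrib, pow_add, mul_smul]
    simp (disch := assumption) only [sign]
    simp only [Finset.insert_union, Finset.union_insert, Finset.insert_idem, neg_smul, smul_neg,
      Finset.sum_neg_distrib, ← mul_smul, ← pow_add]
    rw [ih, ih fun r => g (insert a r)]
    abel

section DisjointUnion

variable {α R : Type*} [DecidableEq α] [Monoid R] {f : Finset α → R}

theorem map_sdiff_mul_map (hf : ∀ u w, Disjoint u w → f (u ∪ w) = f u * f w)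
    (u w : Finset α) : f (w \ u) * f u = f (u ∪ w) := by
  rw [← hf _ _ Finset.sdiff_disjoint, Finset.sdiff_union_self_eq_union, Finset.union_comm]

theorem map_mul_star_map [StarMul R]
    (hf : ∀ u w, Disjoint u w → f (u ∪ w) = f u * f w) (hunit : ∀ u, f u ∈ unitary R)
    (u w : Finset α) : f u * star (f w) = star (f (w \ u)) * f (u \ w) :=
  calc f u * star (f w) = star (f (w \ u)) * (f (w \ u) * f u) * star (f w) := by
        rw [← mul_assoc, Unitary.star_mul_self_of_mem (hunit _), one_mul]
    _ = star (f (w \ u)) * (f (u \ w) * f w) * star (f w) := by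
        rw [map_sdiff_mul_map hf, map_sdiff_mul_map hf, Finset.union_comm]
    _ = star (f (w \ u)) * f (u \ w) := by
        rw [mul_assoc, mul_assoc, Unitary.mul_star_self_of_mem (hunit _), mul_one]

end DisjointUnion

section RegularDilation

variable {α H K : Type*} [DecidableEq α]
  [NormedAddCommGroup H] [InnerProductSpace ℂ H] [CompleteSpace H]
  [NormedAddCommGroup K] [InnerProductSpace ℂ K] [CompleteSpace K]
  {J : H →L[ℂ] K} {T : Finset α → H →L[ℂ] H} {V : Finset α → K →L[ℂ] K}

theorem adjoint_comp_adjoint_comp_eq_of_regular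
    (hT : ∀ u w, Disjoint u w → T (u ∪ w) = T u ∘L T w)
    (hV : ∀ u w, Disjoint u w → V (u ∪ w) = V u ∘L V w) (hunit : ∀ u, V u ∈ unitary (K →L[ℂ] K))
    (hreg : ∀ p q, Disjoint p q → adjoint J ∘L (adjoint (V q) ∘L V p) ∘L J = adjoint (T q) ∘L T p)
    (u w : Finset α) :
    adjoint (adjoint (V u) ∘L J ∘L T u) ∘L (adjoint (V w) ∘L J ∘L T w)
      = adjoint (T (u ∪ w)) ∘L T (u ∪ w) := by
  have hVV : V u ∘L adjoint (V w) = adjoint (V (w \ u)) ∘L V (u \ w) :=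
    map_mul_star_map hV hunit u w
  have hJ := hreg (u \ w) (w \ u) (Finset.sdiff_disjoint.mono_right Finset.sdiff_subset)
  calc adjoint (adjoint (V u) ∘L J ∘L T u) ∘L (adjoint (V w) ∘L J ∘L T w)
      = adjoint (T u) ∘L (adjoint J ∘L (V u ∘L adjoint (V w)) ∘L J) ∘L T w := by
        simp only [adjoint_comp, adjoint_adjoint, comp_assoc]
    _ = adjoint (T (w \ u) ∘L T u) ∘L (T (u \ w) ∘L T w) := by
        rw [hVV, hJ, adjoint_comp]; rfl
    _ = adjoint (T (u ∪ w)) ∘L T (u ∪ w) := by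
        have hu : T (w \ u) ∘L T u = T (u ∪ w) := map_sdiff_mul_map hT u w
        have hw : T (u \ w) ∘L T w = T (u ∪ w) := Finset.union_comm w u ▸ map_sdiff_mul_map hT w u
        rw [hu, hw]

theorem isPositive_sum_powerset_neg_one_pow_smul_of_regular
    (hT : ∀ u w, Disjoint u w → T (u ∪ w) = T u ∘L T w)
    (hV : ∀ u w, Disjoint u w → V (u ∪ w) = V u ∘L V w) (hunit : ∀ u, V u ∈ unitary (K →L[ℂ] K))
    (hreg : ∀ p q, Disjoint p q → adjoint J ∘L (adjoint (V q) ∘L V p) ∘L J = adjoint (T q) ∘L T p)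
    (v : Finset α) :
    (∑ u ∈ v.powerset, ((-1 : ℂ) ^ u.card) • (adjoint (T u) ∘L T u)).IsPositive := by
  set Z := ∑ u ∈ v.powerset, ((-1 : ℂ) ^ u.card) • (adjoint (V u) ∘L J ∘L T u)
  have hZ : adjoint Z ∘L Z = ∑ u ∈ v.powerset, ((-1 : ℂ) ^ u.card) • (adjoint (T u) ∘L T u) := by
    rw [← Finset.sum_powerset_sum_powerset_neg_one_pow_smul_union]
    simp only [Z, map_sum, map_smulₛₗ, finsetSum_comp, comp_finsetSum, smul_comp, comp_smul,
      adjoint_comp_adjoint_comp_eq_of_regular hT hV hunit hreg, map_pow, map_neg, map_one,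
      Finset.smul_sum, smul_smul, pow_add]
    simp only [Finset.union_comm]
  exact hZ ▸ isPositive_adjoint_comp_self Z

end RegularDilation

section RestrFun

variable {Ω : Type*} [DecidableEq Ω] {s : Ω → ℝ}

theorem restrFun_mem_sumSemigroup {S : Ω → Set ℝ} (hS : ∀ j, 0 ∈ S j) (hs : s ∈ SumSemigroup S)
    (u : Finset Ω) : restrFun s u ∈ SumSemigroup S := by
  refine ⟨u.finite_toSet.subset fun j hj => ?_, fun j => ?_⟩
  · by_contra hju
    exact hj (if_neg hju)
  · unfold restrFun
    split_ifs
    exacts [hs.2 j, hS j]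

theorem restrFun_union {u w : Finset Ω} (h : Disjoint u w) :
    restrFun s (u ∪ w) = restrFun s u + restrFun s w := by
  funext j
  by_cases hu : j ∈ u
  · simp [restrFun, hu, Finset.disjoint_left.mp h hu]
  · simp [restrFun, hu]

theorem posPart'_restrFun_sub_restrFun (hs : 0 ≤ s) {p q : Finset Ω} (h : Disjoint p q) :
    posPart' (restrFun s p - restrFun s q) = restrFun s p := by
  funext j
  by_cases hp : j ∈ p
  · simpa [posPart', restrFun, hp, Finset.disjoint_left.mp h hp] using hs j
  by_cases hq : j ∈ q
  · simpa [posPart', restrFun, hp, hq] using hs j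
  · simp [posPart', restrFun, hp, hq]

theorem negPart'_restrFun_sub_restrFun (hs : 0 ≤ s) {p q : Finset Ω} (h : Disjoint p q) :
    negPart' (restrFun s p - restrFun s q) = restrFun s q := by
  rw [negPart', posPart'_restrFun_sub_restrFun hs h, sub_sub_cancel]

end RestrFun

theorem regular_unitary_dilation_implies_positivity_condition_general
    {Ω : Type} [DecidableEq Ω] {H : Type} [NormedAddCommGroup H]
    [InnerProductSpace ℂ H] [CompleteSpace H]
    (S : Ω → Set ℝ) (hS : ∀ i, IsCommensurableSubsemigroup (S i))
    -- `T` is a semigroup of contractions on `H` over `SumSemigroup S`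
    (T : (Ω → ℝ) → H →L[ℂ] H)
    (hTsg : ∀ a ∈ SumSemigroup S, ∀ b ∈ SumSemigroup S, T (a + b) = T a ∘L T b)
    -- `T` has a regular unitary dilation
    (hdil : ∃ (K : Type) (_ : NormedAddCommGroup K) (_ : InnerProductSpace ℂ K)
      (_ : CompleteSpace K) (ι : H →L[ℂ] K) (U : (Ω → ℝ) → K →L[ℂ] K),
      (∀ h : H, ‖ι h‖ = ‖h‖) ∧
      U 0 = 1 ∧
      (∀ a ∈ SumSemigroup S, ∀ b ∈ SumSemigroup S, U (a + b) = U a ∘L U b) ∧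
      (∀ s ∈ SumSemigroup S, U s ∘L adjoint (U s) = 1 ∧ adjoint (U s) ∘L U s = 1) ∧
      (∀ a ∈ SumSemigroup S, ∀ b ∈ SumSemigroup S,
        adjoint ι ∘L (adjoint (U (negPart' (a - b))) ∘L U (posPart' (a - b))) ∘L ι
          = adjoint (T (negPart' (a - b))) ∘L T (posPart' (a - b)))) :
    -- then the regularity (positivity) condition holds
    ∀ (v : Finset Ω), ∀ s ∈ SumSemigroup S,
      (∑ u ∈ v.powerset, ((-1 : ℂ) ^ u.card) •
        (adjoint (T (restrFun s u)) ∘L T (restrFun s u))).IsPositive := by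
  obtain ⟨K, _, _, _, ι, U, -, -, hUsg, hUunit, hreg⟩ := hdil
  intro v s hs
  have hmem := restrFun_mem_sumSemigroup (fun i => (hS i).1) hs
  have hs0 : 0 ≤ s := fun j => (hS j).2.2.1 _ (hs.2 j)
  refine isPositive_sum_powerset_neg_one_pow_smul_of_regular (J := ι) (V := (U <| restrFun s ·))
    (fun u w h => ?_) (fun u w h => ?_) (fun u => ?_) (fun p q h => ?_) v
  · rw [restrFun_union h]
    exact hTsg _ (hmem u) _ (hmem w)
  · rw [restrFun_union h]
    exact hUsg _ (hmem u) _ (hmem w)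
  · exact ⟨(hUunit _ (hmem u)).2, (hUunit _ (hmem u)).1⟩
  · simpa only [posPart'_restrFun_sub_restrFun hs0 h, negPart'_restrFun_sub_restrFun hs0 h]
      using hreg _ (hmem p) _ (hmem q)

/-- **Necessity of the regularity condition.**  If a semigroup of contractions over
`S = Σᵢ Sᵢ` (`Sᵢ` commensurable unital subsemigroups of `ℝ₊`) has a regular unitary
dilation, then for every finite `v ⊆ Ω` and every `s ∈ S`,
`∑_{u ⊆ v} (-1)^{|u|} T_{s[u]}* T_{s[u]} ≥ 0`. -/
theorem regular_unitary_dilation_implies_positivity_condition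
    {Ω : Type} [DecidableEq Ω] {H : Type} [NormedAddCommGroup H]
    [InnerProductSpace ℂ H] [CompleteSpace H]
    (S : Ω → Set ℝ) (hS : ∀ i, IsCommensurableSubsemigroup (S i))
    -- `T` is a semigroup of contractions on `H` over `SumSemigroup S`
    (T : (Ω → ℝ) → H →L[ℂ] H)
    (hT0 : T 0 = 1)
    (hTsg : ∀ a ∈ SumSemigroup S, ∀ b ∈ SumSemigroup S, T (a + b) = T a ∘L T b)
    (hTcontr : ∀ s ∈ SumSemigroup S, ‖T s‖ ≤ 1)
    -- `T` has a regular unitary dilation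
    (hdil : ∃ (K : Type) (_ : NormedAddCommGroup K) (_ : InnerProductSpace ℂ K)
      (_ : CompleteSpace K) (ι : H →L[ℂ] K) (U : (Ω → ℝ) → K →L[ℂ] K),
      (∀ h : H, ‖ι h‖ = ‖h‖) ∧
      U 0 = 1 ∧
      (∀ a ∈ SumSemigroup S, ∀ b ∈ SumSemigroup S, U (a + b) = U a ∘L U b) ∧
      (∀ s ∈ SumSemigroup S, U s ∘L adjoint (U s) = 1 ∧ adjoint (U s) ∘L U s = 1) ∧
      (∀ a ∈ SumSemigroup S, ∀ b ∈ SumSemigroup S,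
        adjoint ι ∘L (adjoint (U (negPart' (a - b))) ∘L U (posPart' (a - b))) ∘L ι
          = adjoint (T (negPart' (a - b))) ∘L T (posPart' (a - b)))) :
    -- then the regularity (positivity) condition holds
    ∀ (v : Finset Ω), ∀ s ∈ SumSemigroup S,
      (∑ u ∈ v.powerset, ((-1 : ℂ) ^ u.card) •
        (adjoint (T (restrFun s u)) ∘L T (restrFun s u))).IsPositive :=
  regular_unitary_dilation_implies_positivity_condition_general S hS T hTsg hdil
end

section
/- Let Ω be a set, for each i ∈ Ω let S_i be a commensurable unital subsemigroup of ℝ₊, and let S be the semigroup of all finitely supported functions s : Ω → ℝ₊ with s(j) ∈ S_j for all j. Let T = {T_s}_{s∈S} be a semigroup of contractions on a complex Hilbert space H, and suppose U = {U_s}_{s∈S} on K ⊇ H and U' = {U'_s}_{s∈S} on K' ⊇ H are two minimal regular unitary dilations of T (minimal meaning the dilation space is the closed linear span of {U_{s₋}* U_{s₊} h : s ∈ S − S, h ∈ H}). Then there exists a unitary operator W : K → K' that fixes H pointwise and satisfies W U_s = U'_s W for all s ∈ S. -/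
/-!
For `a, b ∈ S` and `h ∈ H`, the vectors `U_b* U_a h` span a dense subspace of a minimal dilation
space. Since the `U_s` are commuting unitaries, the inner product of `U_b₁* U_a₁ h₁` with
`U_b₂* U_a₂ h₂` equals `⟨U_{d₋}* U_{d₊} h₁, h₂⟩` with `d = (b₂ + a₁) - (b₁ + a₂)`, and regularity
turns this into `⟨T_{d₋}* T_{d₊} h₁, h₂⟩`; commensurability of the `S_i` is what puts `d₊` and
`d₋` back in `S`. Hence the generating families of `K` and `K'` have the same Gram matrix, and
`U_b* U_a h ↦ U'_b* U'_a h` extends to a unitary `W : K → K'`. It fixes `H` (take `a = b = 0`)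
and intertwines the dilations because `U_s` sends `U_b* U_a h` to `U_b* U_{s+a} h`.
-/

open ContinuousLinearMap

open Submodule

section Commensurable

variable {A : Set ℝ}

theorem IsCommensurableSubsemigroup.natCast_mul_mem (hA : IsCommensurableSubsemigroup A)
    {x : ℝ} (hx : x ∈ A) (n : ℕ) : (n : ℝ) * x ∈ A := by
  induction n with
  | zero => simpa using hA.1
  | succ n ih => simpa [add_mul] using hA.2.1 _ ih _ hx

theorem IsCommensurableSubsemigroup.max_sub_zero_mem (hA : IsCommensurableSubsemigroup A)
    {x y : ℝ} (hx : x ∈ A) (hy : y ∈ A) : max (y - x) 0 ∈ A := by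
  obtain ⟨s₀, hs₀, n, hn⟩ := hA.2.2.2 2 ![x, y] (Fin.forall_fin_two.2 ⟨hx, hy⟩)
  have hs₀_nonneg : 0 ≤ s₀ := hA.2.2.1 _ hs₀
  have hx : x = n 0 * s₀ := hn 0
  have hy : y = n 1 * s₀ := hn 1
  have h_eq : max (y - x) 0 = ((n 1 - n 0 : ℕ) : ℝ) * s₀ := by
    rw [hx, hy, ← sub_mul]
    rcases le_total (n 0) (n 1) with h | h
    · rw [Nat.cast_sub h, max_eq_left (mul_nonneg (by simpa using h) hs₀_nonneg)]
    · have : ((n 1 : ℝ) - n 0) * s₀ ≤ 0 :=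
        mul_nonpos_of_nonpos_of_nonneg (by simpa using h) hs₀_nonneg
      rw [Nat.sub_eq_zero_of_le h, max_eq_right this, Nat.cast_zero, zero_mul]
  exact h_eq ▸ hA.natCast_mul_mem hs₀ _

end Commensurable

section SumSemigroup

variable {Ω : Type*} {S : Ω → Set ℝ} {a b : Ω → ℝ}

theorem zero_mem_sumSemigroup (hS : ∀ i, IsCommensurableSubsemigroup (S i)) :
    (0 : Ω → ℝ) ∈ SumSemigroup S :=
  ⟨by simp, fun j => (hS j).1⟩

theorem add_mem_sumSemigroup (hS : ∀ i, IsCommensurableSubsemigroup (S i))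
    (ha : a ∈ SumSemigroup S) (hb : b ∈ SumSemigroup S) : a + b ∈ SumSemigroup S :=
  ⟨(ha.1.union hb.1).subset (Function.support_add _ _),
    fun j => (hS j).2.1 _ (ha.2 j) _ (hb.2 j)⟩

theorem inf_mem_sumSemigroup (ha : a ∈ SumSemigroup S) (hb : b ∈ SumSemigroup S) :
    a ⊓ b ∈ SumSemigroup S := by
  refine ⟨(ha.1.union hb.1).subset fun j hj => ?_, fun j => ?_⟩
  · by_contra h
    simp_all
  · rcases min_choice (a j) (b j) with h | h
    · exact (show (a ⊓ b) j = a j from h) ▸ ha.2 j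
    · exact (show (a ⊓ b) j = b j from h) ▸ hb.2 j

theorem posPart'_sub_mem_sumSemigroup (hS : ∀ i, IsCommensurableSubsemigroup (S i))
    (ha : a ∈ SumSemigroup S) (hb : b ∈ SumSemigroup S) :
    posPart' (a - b) ∈ SumSemigroup S :=
  ⟨(ha.1.union hb.1).subset <| (Function.support_comp_subset (g := (max · 0)) (by simp) _).trans
      (Function.support_sub a b),
    fun j => (hS j).max_sub_zero_mem (hb.2 j) (ha.2 j)⟩

theorem negPart'_sub (a b : Ω → ℝ) : negPart' (a - b) = posPart' (b - a) := by
  funext j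
  simp only [negPart', posPart', Pi.sub_apply, ← max_sub_sub_right, sub_self, zero_sub, neg_sub,
    max_comm]

theorem negPart'_sub_mem_sumSemigroup (hS : ∀ i, IsCommensurableSubsemigroup (S i))
    (ha : a ∈ SumSemigroup S) (hb : b ∈ SumSemigroup S) :
    negPart' (a - b) ∈ SumSemigroup S :=
  negPart'_sub a b ▸ posPart'_sub_mem_sumSemigroup hS hb ha

theorem inf_add_posPart'_sub (a b : Ω → ℝ) : a ⊓ b + posPart' (a - b) = a := by
  funext j
  simp only [Pi.add_apply, Pi.inf_apply, posPart', Pi.sub_apply]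
  rcases le_total (a j) (b j) with h | h
  · rw [min_eq_left h, max_eq_right (sub_nonpos.2 h), add_zero]
  · rw [min_eq_right h, max_eq_left (sub_nonneg.2 h), add_sub_cancel]

theorem inf_add_negPart'_sub (a b : Ω → ℝ) : a ⊓ b + negPart' (a - b) = b := by
  rw [negPart'_sub, inf_comm, inf_add_posPart'_sub]

end SumSemigroup

section UnitarySemigroup

variable {𝕜 E M : Type*} [RCLike 𝕜] [NormedAddCommGroup E] [InnerProductSpace 𝕜 E]
  [CompleteSpace E] {P : Set M} {U : M → E →L[𝕜] E} {a b : M}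

theorem comp_adjoint_comm_of_map_add [AddCommMagma M]
    (hU : ∀ a ∈ P, ∀ b ∈ P, U (a + b) = U a ∘L U b)
    (hunit : ∀ s ∈ P, U s ∘L adjoint (U s) = 1 ∧ adjoint (U s) ∘L U s = 1)
    (ha : a ∈ P) (hb : b ∈ P) :
    U a ∘L adjoint (U b) = adjoint (U b) ∘L U a := by
  have hcomm : U a ∘L U b = U b ∘L U a := by rw [← hU a ha b hb, ← hU b hb a ha, add_comm]
  exact Commute.units_inv_right (u := ⟨U b, adjoint (U b), (hunit b hb).1, (hunit b hb).2⟩) hcomm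

theorem adjoint_add_comp_add [Add M] (hU : ∀ a ∈ P, ∀ b ∈ P, U (a + b) = U a ∘L U b)
    {r : M} (hr : r ∈ P) (ha : a ∈ P) (hb : b ∈ P) (hr_iso : adjoint (U r) ∘L U r = 1) :
    adjoint (U (r + b)) ∘L U (r + a) = adjoint (U b) ∘L U a := by
  rw [hU r hr a ha, hU r hr b hb, adjoint_comp, comp_assoc, ← comp_assoc (adjoint (U r)), hr_iso]
  rfl

end UnitarySemigroup

section Extension

theorem exists_linearIsometryEquiv_comp_eq {𝕜 E F G : Type*} [NontriviallyNormedField 𝕜]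
    [NormedAddCommGroup E] [NormedSpace 𝕜 E] [CompleteSpace E]
    [NormedAddCommGroup F] [NormedSpace 𝕜 F] [CompleteSpace F]
    [NormedAddCommGroup G] [NormedSpace 𝕜 G]
    (p : G →ₗᵢ[𝕜] E) (q : G →ₗᵢ[𝕜] F) (hp : DenseRange p) (hq : DenseRange q) :
    ∃ W : E ≃ₗᵢ[𝕜] F, ∀ z, W (p z) = q z := by
  set W₀ : E →L[𝕜] F := q.toContinuousLinearMap.extend p.toContinuousLinearMap
  have hW₀ : ∀ z, W₀ (p z) = q z :=
    q.toContinuousLinearMap.extend_eq hp p.isometry.isUniformInducing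
  have hW₀_norm : ∀ x, ‖W₀ x‖ = ‖x‖ := fun x =>
    hp.induction_on x (isClosed_eq (by fun_prop) continuous_norm) fun z => by
      rw [hW₀, q.norm_map, p.norm_map]
  let W : E →ₗᵢ[𝕜] F := ⟨W₀, hW₀_norm⟩
  have hW_surj : Function.Surjective W := by
    have hdense : DenseRange W :=
      hq.mono (by rintro _ ⟨z, rfl⟩; exact ⟨p z, hW₀ z⟩)
    rw [← Set.range_eq_univ, ← hdense.closure_range,
      W.isometry.isClosedEmbedding.isClosed_range.closure_eq]
  exact ⟨LinearIsometryEquiv.ofSurjective W hW_surj, hW₀⟩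

variable {𝕜 E F : Type*} [RCLike 𝕜] [NormedAddCommGroup E] [InnerProductSpace 𝕜 E]
  [NormedAddCommGroup F] [InnerProductSpace 𝕜 F]

theorem inner_fst_eq_inner_snd_of_mem_span {t : Set (E × F)}
    (ht : ∀ z ∈ t, ∀ z' ∈ t, inner 𝕜 z.1 z'.1 = inner 𝕜 z.2 z'.2) {z z' : E × F}
    (hz : z ∈ span 𝕜 t) (hz' : z' ∈ span 𝕜 t) : inner 𝕜 z.1 z'.1 = inner 𝕜 z.2 z'.2 := by
  induction hz, hz' using Submodule.span_induction₂ with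
  | mem_mem x y hx hy => exact ht x hx y hy
  | zero_left => simp
  | zero_right => simp
  | add_left x y z _ _ _ hx hy => simp only [Prod.fst_add, Prod.snd_add, inner_add_left, hx, hy]
  | add_right x y z _ _ _ hy hz => simp only [Prod.fst_add, Prod.snd_add, inner_add_right, hy, hz]
  | smul_left c x y _ _ h => simp only [Prod.smul_fst, Prod.smul_snd, inner_smul_left, h]
  | smul_right c x y _ _ h => simp only [Prod.smul_fst, Prod.smul_snd, inner_smul_right, h]

/-- The unitary is the extension of the graph `span {(v i, w i)}`, which is isometric to both
`span (v '' s)` and `span (w '' s)`. -/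
theorem exists_linearIsometryEquiv_of_inner_eq [CompleteSpace E] [CompleteSpace F]
    {X : Type*} {s : Set X} {v : X → E} {w : X → F}
    (hvw : ∀ i ∈ s, ∀ j ∈ s, inner 𝕜 (v i) (v j) = inner 𝕜 (w i) (w j))
    (hv : Dense (span 𝕜 (v '' s) : Set E)) (hw : Dense (span 𝕜 (w '' s) : Set F)) :
    ∃ W : E ≃ₗᵢ[𝕜] F, ∀ i ∈ s, W (v i) = w i := by
  set G := span 𝕜 ((fun i => (v i, w i)) '' s)
  have hG : ∀ z : G, ‖(z : E × F).1‖ = ‖(z : E × F).2‖ := fun z => by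
    have := inner_fst_eq_inner_snd_of_mem_span (by simpa using hvw) z.2 z.2
    rw [@norm_eq_sqrt_re_inner 𝕜, @norm_eq_sqrt_re_inner 𝕜, this]
  let p : G →ₗᵢ[𝕜] E := ⟨(LinearMap.fst 𝕜 E F).comp G.subtype, fun z => by
    simp [Submodule.coe_norm, Prod.norm_def, hG z]⟩
  let q : G →ₗᵢ[𝕜] F := ⟨(LinearMap.snd 𝕜 E F).comp G.subtype, fun z => by
    simp [Submodule.coe_norm, Prod.norm_def, hG z]⟩
  have hp : Set.range p = span 𝕜 (v '' s) := by
    change Set.range ((LinearMap.fst 𝕜 E F).comp G.subtype) = _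
    rw [← LinearMap.coe_range, LinearMap.range_comp, Submodule.range_subtype, Submodule.map_span,
      Set.image_image]
    rfl
  have hq : Set.range q = span 𝕜 (w '' s) := by
    change Set.range ((LinearMap.snd 𝕜 E F).comp G.subtype) = _
    rw [← LinearMap.coe_range, LinearMap.range_comp, Submodule.range_subtype, Submodule.map_span,
      Set.image_image]
    rfl
  obtain ⟨W, hW⟩ := exists_linearIsometryEquiv_comp_eq p q
    (by rw [DenseRange, hp]; exact hv) (by rw [DenseRange, hq]; exact hw)
  exact ⟨W, fun i hi => hW ⟨(v i, w i), subset_span ⟨i, hi, rfl⟩⟩⟩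

end Extension

section Dilation

variable {𝕜 Ω H K : Type*} [RCLike 𝕜] [NormedAddCommGroup H] [InnerProductSpace 𝕜 H]
  [NormedAddCommGroup K] [InnerProductSpace 𝕜 K] [CompleteSpace K]
  {S : Ω → Set ℝ} {ι : H →L[𝕜] K} {U : (Ω → ℝ) → K →L[𝕜] K}

theorem adjoint_comp_eq_adjoint_negPart'_comp_posPart'
    (hS : ∀ i, IsCommensurableSubsemigroup (S i))
    (hU : ∀ a ∈ SumSemigroup S, ∀ b ∈ SumSemigroup S, U (a + b) = U a ∘L U b)
    (hunit : ∀ s ∈ SumSemigroup S, U s ∘L adjoint (U s) = 1 ∧ adjoint (U s) ∘L U s = 1)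
    {a b : Ω → ℝ} (ha : a ∈ SumSemigroup S) (hb : b ∈ SumSemigroup S) :
    adjoint (U b) ∘L U a = adjoint (U (negPart' (a - b))) ∘L U (posPart' (a - b)) := by
  have hinf := inf_mem_sumSemigroup ha hb
  have h := adjoint_add_comp_add hU hinf (posPart'_sub_mem_sumSemigroup hS ha hb)
    (negPart'_sub_mem_sumSemigroup hS ha hb) (hunit _ hinf).2
  rwa [inf_add_posPart'_sub, inf_add_negPart'_sub] at h

noncomputable def dilationVector (ι : H →L[𝕜] K) (U : (Ω → ℝ) → K →L[𝕜] K)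
    (x : (Ω → ℝ) × (Ω → ℝ) × H) : K :=
  adjoint (U x.2.1) (U x.1 (ι x.2.2))

theorem dilationVector_zero (hU0 : U 0 = 1) (h : H) : dilationVector ι U (0, 0, h) = ι h := by
  simp [dilationVector, hU0, adjoint_one]

theorem apply_dilationVector
    (hU : ∀ a ∈ SumSemigroup S, ∀ b ∈ SumSemigroup S, U (a + b) = U a ∘L U b)
    (hunit : ∀ s ∈ SumSemigroup S, U s ∘L adjoint (U s) = 1 ∧ adjoint (U s) ∘L U s = 1)
    {s a b : Ω → ℝ} (hs : s ∈ SumSemigroup S) (ha : a ∈ SumSemigroup S)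
    (hb : b ∈ SumSemigroup S) (h : H) :
    U s (dilationVector ι U (a, b, h)) = dilationVector ι U (s + a, b, h) := by
  simp only [dilationVector, hU s hs a ha]
  exact congr($(comp_adjoint_comm_of_map_add hU hunit hs hb) (U a (ι h)))

theorem inner_dilationVector [CompleteSpace H] {T : (Ω → ℝ) → H →L[𝕜] H}
    (hS : ∀ i, IsCommensurableSubsemigroup (S i))
    (hU : ∀ a ∈ SumSemigroup S, ∀ b ∈ SumSemigroup S, U (a + b) = U a ∘L U b)
    (hunit : ∀ s ∈ SumSemigroup S, U s ∘L adjoint (U s) = 1 ∧ adjoint (U s) ∘L U s = 1)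
    (hreg : ∀ a ∈ SumSemigroup S, ∀ b ∈ SumSemigroup S,
      adjoint ι ∘L (adjoint (U (negPart' (a - b))) ∘L U (posPart' (a - b))) ∘L ι
        = adjoint (T (negPart' (a - b))) ∘L T (posPart' (a - b)))
    {a₁ b₁ a₂ b₂ : Ω → ℝ} (ha₁ : a₁ ∈ SumSemigroup S) (hb₁ : b₁ ∈ SumSemigroup S)
    (ha₂ : a₂ ∈ SumSemigroup S) (hb₂ : b₂ ∈ SumSemigroup S) (h₁ h₂ : H) :
    inner 𝕜 (dilationVector ι U (a₁, b₁, h₁)) (dilationVector ι U (a₂, b₂, h₂)) =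
      inner 𝕜 ((adjoint (T (negPart' (b₂ + a₁ - (b₁ + a₂)))) ∘L
        T (posPart' (b₂ + a₁ - (b₁ + a₂)))) h₁) h₂ := by
  have hd := add_mem_sumSemigroup hS hb₂ ha₁
  have he := add_mem_sumSemigroup hS hb₁ ha₂
  have hcomp : adjoint (U a₂) ∘L U b₂ ∘L adjoint (U b₁) ∘L U a₁ =
      adjoint (U (b₁ + a₂)) ∘L U (b₂ + a₁) := by
    rw [← comp_assoc (U b₂), comp_adjoint_comm_of_map_add hU hunit hb₂ hb₁, hU _ hb₁ _ ha₂,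
      hU _ hb₂ _ ha₁, adjoint_comp]
    simp only [comp_assoc]
  rw [← hreg _ hd _ he, ← adjoint_comp_eq_adjoint_negPart'_comp_posPart' hS hU hunit hd he,
    ← hcomp]
  simp only [dilationVector, adjoint_inner_right, comp_apply, adjoint_inner_left]

theorem dense_span_dilationVector (hS : ∀ i, IsCommensurableSubsemigroup (S i))
    (hmin : (span 𝕜 {x : K | ∃ a ∈ SumSemigroup S, ∃ b ∈ SumSemigroup S,
        ∃ h : H, x = adjoint (U (negPart' (a - b)))
          (U (posPart' (a - b)) (ι h))}).topologicalClosure = ⊤) :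
    Dense (span 𝕜 (dilationVector ι U '' (SumSemigroup S ×ˢ SumSemigroup S ×ˢ Set.univ)) :
      Set K) := by
  refine (dense_iff_topologicalClosure_eq_top.2 hmin).mono (span_mono ?_)
  rintro _ ⟨a, ha, b, hb, h, rfl⟩
  exact ⟨(posPart' (a - b), negPart' (a - b), h), ⟨posPart'_sub_mem_sumSemigroup hS ha hb,
    negPart'_sub_mem_sumSemigroup hS ha hb, trivial⟩, rfl⟩

end Dilation

theorem minimal_regular_unitary_dilation_unique_general
    {Ω : Type} {H : Type} [NormedAddCommGroup H] [InnerProductSpace ℂ H]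
    [CompleteSpace H]
    {K : Type} [NormedAddCommGroup K] [InnerProductSpace ℂ K] [CompleteSpace K]
    {K' : Type} [NormedAddCommGroup K'] [InnerProductSpace ℂ K'] [CompleteSpace K']
    (S : Ω → Set ℝ) (hS : ∀ i, IsCommensurableSubsemigroup (S i))
    -- `T` is a semigroup of contractions on `H` over `SumSemigroup S`
    (T : (Ω → ℝ) → H →L[ℂ] H)
    -- `U` on `K ⊇ H` is a minimal regular unitary dilation of `T`
    (ι : H →L[ℂ] K)
    (U : (Ω → ℝ) → K →L[ℂ] K)
    (hU0 : U 0 = 1)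
    (hUsg : ∀ a ∈ SumSemigroup S, ∀ b ∈ SumSemigroup S, U (a + b) = U a ∘L U b)
    (hUun : ∀ s ∈ SumSemigroup S, U s ∘L adjoint (U s) = 1 ∧ adjoint (U s) ∘L U s = 1)
    (hreg : ∀ a ∈ SumSemigroup S, ∀ b ∈ SumSemigroup S,
      adjoint ι ∘L (adjoint (U (negPart' (a - b))) ∘L U (posPart' (a - b))) ∘L ι
        = adjoint (T (negPart' (a - b))) ∘L T (posPart' (a - b)))
    (hmin : (Submodule.span ℂ {x : K | ∃ a ∈ SumSemigroup S, ∃ b ∈ SumSemigroup S,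
        ∃ h : H, x = adjoint (U (negPart' (a - b)))
          (U (posPart' (a - b)) (ι h))}).topologicalClosure = ⊤)
    -- `U'` on `K' ⊇ H` is a minimal regular unitary dilation of `T`
    (ι' : H →L[ℂ] K')
    (U' : (Ω → ℝ) → K' →L[ℂ] K')
    (hU'0 : U' 0 = 1)
    (hU'sg : ∀ a ∈ SumSemigroup S, ∀ b ∈ SumSemigroup S, U' (a + b) = U' a ∘L U' b)
    (hU'un : ∀ s ∈ SumSemigroup S,
      U' s ∘L adjoint (U' s) = 1 ∧ adjoint (U' s) ∘L U' s = 1)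
    (hreg' : ∀ a ∈ SumSemigroup S, ∀ b ∈ SumSemigroup S,
      adjoint ι' ∘L (adjoint (U' (negPart' (a - b))) ∘L U' (posPart' (a - b))) ∘L ι'
        = adjoint (T (negPart' (a - b))) ∘L T (posPart' (a - b)))
    (hmin' : (Submodule.span ℂ {x : K' | ∃ a ∈ SumSemigroup S, ∃ b ∈ SumSemigroup S,
        ∃ h : H, x = adjoint (U' (negPart' (a - b)))
          (U' (posPart' (a - b)) (ι' h))}).topologicalClosure = ⊤) :
    -- then there is a unitary `W : K → K'` fixing `H` and intertwining `U`, `U'`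
    ∃ W : K ≃ₗᵢ[ℂ] K',
      (∀ h : H, W (ι h) = ι' h) ∧
      ∀ s ∈ SumSemigroup S, ∀ x : K, W (U s x) = U' s (W x) := by
  have h0 := zero_mem_sumSemigroup hS
  obtain ⟨W, hW⟩ := exists_linearIsometryEquiv_of_inner_eq
    (s := SumSemigroup S ×ˢ SumSemigroup S ×ˢ Set.univ)
    (v := dilationVector ι U) (w := dilationVector ι' U')
    (by
      rintro ⟨a₁, b₁, h₁⟩ ⟨ha₁, hb₁, -⟩ ⟨a₂, b₂, h₂⟩ ⟨ha₂, hb₂, -⟩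
      rw [inner_dilationVector hS hUsg hUun hreg ha₁ hb₁ ha₂ hb₂,
        inner_dilationVector hS hU'sg hU'un hreg' ha₁ hb₁ ha₂ hb₂])
    (dense_span_dilationVector hS hmin) (dense_span_dilationVector hS hmin')
  refine ⟨W, fun h => ?_, fun s hs => ?_⟩
  · rw [← dilationVector_zero hU0, hW _ ⟨h0, h0, trivial⟩, dilationVector_zero hU'0]
  · have hWU : (W : K →L[ℂ] K') ∘L U s = U' s ∘L W := by
      refine ContinuousLinearMap.ext_on (dense_span_dilationVector hS hmin) ?_
      rintro _ ⟨⟨a, b, h⟩, ⟨ha, hb, -⟩, rfl⟩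
      change W (U s _) = U' s (W _)
      rw [apply_dilationVector hUsg hUun hs ha hb,
        hW (s + a, b, h) ⟨add_mem_sumSemigroup hS hs ha, hb, trivial⟩, hW _ ⟨ha, hb, trivial⟩,
        apply_dilationVector hU'sg hU'un hs ha hb]
    exact fun x => congr($hWU x)

/-- **Uniqueness of the minimal regular unitary dilation.**  Any two minimal regular
unitary dilations of a semigroup of contractions over `S = Σᵢ Sᵢ` are unitarily
equivalent via a unitary fixing `H` and intertwining the dilations. -/
theorem minimal_regular_unitary_dilation_unique
    {Ω : Type} {H : Type} [NormedAddCommGroup H] [InnerProductSpace ℂ H]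
    [CompleteSpace H]
    {K : Type} [NormedAddCommGroup K] [InnerProductSpace ℂ K] [CompleteSpace K]
    {K' : Type} [NormedAddCommGroup K'] [InnerProductSpace ℂ K'] [CompleteSpace K']
    (S : Ω → Set ℝ) (hS : ∀ i, IsCommensurableSubsemigroup (S i))
    -- `T` is a semigroup of contractions on `H` over `SumSemigroup S`
    (T : (Ω → ℝ) → H →L[ℂ] H)
    (hT0 : T 0 = 1)
    (hTsg : ∀ a ∈ SumSemigroup S, ∀ b ∈ SumSemigroup S, T (a + b) = T a ∘L T b)
    (hTcontr : ∀ s ∈ SumSemigroup S, ‖T s‖ ≤ 1)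
    -- `U` on `K ⊇ H` is a minimal regular unitary dilation of `T`
    (ι : H →L[ℂ] K) (hι : ∀ h : H, ‖ι h‖ = ‖h‖)
    (U : (Ω → ℝ) → K →L[ℂ] K)
    (hU0 : U 0 = 1)
    (hUsg : ∀ a ∈ SumSemigroup S, ∀ b ∈ SumSemigroup S, U (a + b) = U a ∘L U b)
    (hUun : ∀ s ∈ SumSemigroup S, U s ∘L adjoint (U s) = 1 ∧ adjoint (U s) ∘L U s = 1)
    (hreg : ∀ a ∈ SumSemigroup S, ∀ b ∈ SumSemigroup S,
      adjoint ι ∘L (adjoint (U (negPart' (a - b))) ∘L U (posPart' (a - b))) ∘L ι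
        = adjoint (T (negPart' (a - b))) ∘L T (posPart' (a - b)))
    (hmin : (Submodule.span ℂ {x : K | ∃ a ∈ SumSemigroup S, ∃ b ∈ SumSemigroup S,
        ∃ h : H, x = adjoint (U (negPart' (a - b)))
          (U (posPart' (a - b)) (ι h))}).topologicalClosure = ⊤)
    -- `U'` on `K' ⊇ H` is a minimal regular unitary dilation of `T`
    (ι' : H →L[ℂ] K') (hι' : ∀ h : H, ‖ι' h‖ = ‖h‖)
    (U' : (Ω → ℝ) → K' →L[ℂ] K')
    (hU'0 : U' 0 = 1)
    (hU'sg : ∀ a ∈ SumSemigroup S, ∀ b ∈ SumSemigroup S, U' (a + b) = U' a ∘L U' b)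
    (hU'un : ∀ s ∈ SumSemigroup S,
      U' s ∘L adjoint (U' s) = 1 ∧ adjoint (U' s) ∘L U' s = 1)
    (hreg' : ∀ a ∈ SumSemigroup S, ∀ b ∈ SumSemigroup S,
      adjoint ι' ∘L (adjoint (U' (negPart' (a - b))) ∘L U' (posPart' (a - b))) ∘L ι'
        = adjoint (T (negPart' (a - b))) ∘L T (posPart' (a - b)))
    (hmin' : (Submodule.span ℂ {x : K' | ∃ a ∈ SumSemigroup S, ∃ b ∈ SumSemigroup S,
        ∃ h : H, x = adjoint (U' (negPart' (a - b)))
          (U' (posPart' (a - b)) (ι' h))}).topologicalClosure = ⊤) :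
    -- then there is a unitary `W : K → K'` fixing `H` and intertwining `U`, `U'`
    ∃ W : K ≃ₗᵢ[ℂ] K',
      (∀ h : H, W (ι h) = ι' h) ∧
      ∀ s ∈ SumSemigroup S, ∀ x : K, W (U s x) = U' s (W x) :=
  minimal_regular_unitary_dilation_unique_general S hS T ι U hU0 hUsg hUun hreg hmin ι' U' hU'0
    hU'sg hU'un hreg' hmin'
end

section
/- Let T₁, …, T_n be contractions on a complex Hilbert space H that doubly commute, i.e., for all i ≠ j, T_i T_j = T_j T_i and T_i T_j* = T_j* T_i. Then for every subset-indexed products T_u := ∏_{j∈u} T_j (u ⊆ {1,…,n}), the operator ∑_{u ⊆ {1,…,n}} (−1)^{|u|} T_u* T_u is positive semidefinite. -/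
/-!
Double commutation makes `T_u* T_u` the product of the commuting positive contractions
`D_j = T_j* T_j`, `j ∈ u`, so the alternating sum factors as `∏_j (1 - D_j)`. Each factor is
nonnegative because `‖T_j‖ ≤ 1`, and a product of commuting nonnegative elements of a
C⋆-algebra is nonnegative.
-/

open ContinuousLinearMap Finset Function

section Ring

variable {ι R : Type*} [Ring R]

theorem Pairwise.commute_one_sub {a : ι → R} (ha : Pairwise (Commute on a)) :
    Pairwise (Commute on fun i => 1 - a i) :=
  ha.mono fun _ _ h => (Commute.one_right _).sub_right ((Commute.one_left _).sub_left h)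

theorem Finset.noncommProd_one_sub_eq_sum_powerset {𝕜 : Type*} [Ring 𝕜] [Module 𝕜 R]
    [SMulCommClass 𝕜 R R] (a : ι → R) (ha : Pairwise (Commute on a)) (s : Finset ι) :
    s.noncommProd (fun i => 1 - a i) (ha.commute_one_sub.set_pairwise _) =
      ∑ u ∈ s.powerset, ((-1 : 𝕜) ^ #u) • u.noncommProd a (ha.set_pairwise _) := by
  classical
  induction s using Finset.induction_on with
  | empty => simp
  | insert i s hi ih =>
    have hterm : ∀ u ∈ s.powerset, ((-1 : 𝕜) ^ #(insert i u)) •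
        (insert i u).noncommProd a (ha.set_pairwise _) =
          -(a i * (((-1 : 𝕜) ^ #u) • u.noncommProd a (ha.set_pairwise _))) := by
      intro u hu
      have hiu : i ∉ u := fun h => hi (mem_powerset.mp hu h)
      rw [card_insert_of_notMem hiu, noncommProd_insert_of_notMem _ _ _ _ hiu, pow_succ,
        mul_neg_one, neg_smul, mul_smul_comm]
    rw [noncommProd_insert_of_notMem _ _ _ _ hi, sum_powerset_insert hi, sum_congr rfl hterm,
      sum_neg_distrib, ← mul_sum, ih, sub_mul, one_mul, sub_eq_add_neg]

end Ring

section StarRing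

variable {ι R : Type*} [Ring R] [StarRing R]

theorem Commute.star_mul_self_of_commute_star {a b : R} (h : Commute a b)
    (h' : Commute a (star b)) : Commute (star a * a) (star b * b) := by
  have hab' : Commute (star a) b := by simpa using h'.star_star
  exact (h.star_star.mul_right hab').mul_left (h'.mul_right h)

variable {T : ι → R} (hcomm : Pairwise (Commute on T))
  (hstar : Pairwise fun i j => Commute (T i) (star (T j)))
include hcomm hstar

theorem Pairwise.commute_star_mul_self : Pairwise (Commute on fun i => star (T i) * T i) :=
  fun _ _ h => (hcomm h).star_mul_self_of_commute_star (hstar h)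

theorem star_noncommProd_mul_noncommProd (s : Finset ι) :
    star (s.noncommProd T (hcomm.set_pairwise _)) * s.noncommProd T (hcomm.set_pairwise _) =
      s.noncommProd (fun i => star (T i) * T i)
        ((hcomm.commute_star_mul_self hstar).set_pairwise _) := by
  classical
  induction s using Finset.induction_on with
  | empty => simp
  | insert i s hi ih =>
    set P := s.noncommProd T (hcomm.set_pairwise _)
    have hD : Commute (star (T i) * T i) P := by
      refine noncommProd_commute _ _ _ _ fun j hj => ?_
      have hij : i ≠ j := fun h => hi (h ▸ hj)
      exact (hstar hij.symm).symm.mul_left (hcomm hij)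
    have hD' : Commute (star (T i) * T i) (star P) := by
      simpa using hD.star_star
    rw [noncommProd_insert_of_notMem _ _ _ _ hi, noncommProd_insert_of_notMem _ _ _ _ hi, ← ih,
      star_mul]
    calc star P * star (T i) * (T i * P) = star P * (star (T i) * T i) * P := by noncomm_ring
      _ = star (T i) * T i * (star P * P) := by rw [← hD'.eq, mul_assoc]

end StarRing

section CStarAlgebra

variable {ι A : Type*} [CStarAlgebra A] [PartialOrder A] [StarOrderedRing A]

theorem CStarAlgebra.one_sub_star_mul_self_nonneg {a : A} (ha : ‖a‖ ≤ 1) :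
    0 ≤ 1 - star a * a := by
  refine sub_nonneg.mpr ((CStarAlgebra.norm_le_one_iff_of_nonneg _).mp ?_)
  rw [CStarRing.norm_star_mul_self]
  exact mul_le_one₀ ha (norm_nonneg a) ha

theorem Finset.noncommProd_nonneg (f : ι → A) (hf : Pairwise (Commute on f)) (s : Finset ι)
    (h0 : ∀ i ∈ s, 0 ≤ f i) : 0 ≤ s.noncommProd f (hf.set_pairwise _) := by
  classical
  induction s using Finset.induction_on with
  | empty => simp
  | insert i s hi ih =>
    rw [noncommProd_insert_of_notMem _ _ _ _ hi]
    refine Commute.mul_nonneg (h0 i (mem_insert_self i s))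
      (ih fun j hj => h0 j (mem_insert_of_mem hj)) ?_
    exact noncommProd_commute _ _ _ _ fun j hj => hf fun h => hi (h ▸ hj)

theorem sum_powerset_neg_one_pow_smul_star_noncommProd_mul_nonneg {T : ι → A}
    (hcontr : ∀ i, ‖T i‖ ≤ 1) (hcomm : Pairwise (Commute on T))
    (hstar : Pairwise fun i j => Commute (T i) (star (T j))) (s : Finset ι) :
    0 ≤ ∑ u ∈ s.powerset, ((-1 : ℂ) ^ #u) •
      (star (u.noncommProd T (hcomm.set_pairwise _)) * u.noncommProd T (hcomm.set_pairwise _)) := by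
  simp_rw [star_noncommProd_mul_noncommProd hcomm hstar]
  have hD := hcomm.commute_star_mul_self hstar
  rw [← noncommProd_one_sub_eq_sum_powerset _ hD]
  exact noncommProd_nonneg _ hD.commute_one_sub s fun i _ =>
    CStarAlgebra.one_sub_star_mul_self_nonneg (hcontr i)

end CStarAlgebra

/-- **Doubly commuting contractions satisfy the regularity positivity condition.**
If `T₁, …, Tₙ` are doubly commuting contractions on a complex Hilbert space, then
`∑_{u ⊆ {1,…,n}} (-1)^{|u|} T_u* T_u ≥ 0`, where `T_u = ∏_{j ∈ u} T_j`. -/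
theorem doubly_commuting_contractions_alternating_sum_isPositive
    {H : Type} [NormedAddCommGroup H] [InnerProductSpace ℂ H] [CompleteSpace H]
    (n : ℕ) (T : Fin n → H →L[ℂ] H)
    (hcontr : ∀ i, ‖T i‖ ≤ 1)
    (hcomm : ∀ i j, i ≠ j → Commute (T i) (T j))
    (hdcomm : ∀ i j, i ≠ j → T i ∘L adjoint (T j) = adjoint (T j) ∘L T i) :
    (∑ u : Finset (Fin n), ((-1 : ℂ) ^ u.card) •
      (adjoint (u.noncommProd T (fun a _ b _ hab => hcomm a b hab)) ∘L
        u.noncommProd T (fun a _ b _ hab => hcomm a b hab))).IsPositive := by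
  rw [← nonneg_iff_isPositive]
  have := sum_powerset_neg_one_pow_smul_star_noncommProd_mul_nonneg hcontr
    (fun i j h => hcomm i j h) (fun i j h => hdcomm i j h) univ
  simpa only [powerset_univ, star_eq_adjoint, ContinuousLinearMap.mul_def] using this
end

section
/- Let Ω be a set and let Σ be a subsemigroup of ℝ₊^Ω containing 0 which is +,−-closed. Let T = {T_s}_{s∈Σ} be a semigroup of coisometries on a complex Hilbert space H (i.e., each T_s* is an isometry, T_0 = I, T_s T_t = T_{s+t}). Then there exist a Hilbert space K containing H (via an isometric embedding) and a semigroup of unitaries U = {U_s}_{s∈Σ} on K such that: (1) for all s ∈ Σ − Σ, P_H U_{s₋} U_{s₊}*|_H = T_{s₋} T_{s₊}*, and (2) K is the closed linear span of {U_s h : s ∈ Σ, h ∈ H}. Moreover such a dilation is unique up to unitary equivalence fixing H. -/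
/-!
The operator-valued kernel `k a b = T_{(a-b)₋} T_{(a-b)₊}*` on `Σ` is positive semidefinite:
since `+,−`-closedness puts `min c d` in `Σ` and `T_e T_e* = 1`, one has `k a b = T_d T_c*`
whenever `a + d = b + c` in `Σ`, and on a finite `F ⊆ Σ` with `R = ∑ F` this factors `k` as
`T_{R-a} T_{R-b}*`. The dilation space is the reproducing kernel Hilbert space of `k`, with `H`
sitting inside as the kernel functions at `0`. As `k` is translation invariant, translating the
kernel functions by `r ∈ Σ` extends to an isometry `U_r`, which is onto because
`k_t x = k_{t+r} (T_r* x)`. Conversely, in every minimal unitary dilation the vectors `U_s h`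
have Gram matrix `k`, so any two minimal dilations are unitarily equivalent over `H`.
-/

open ContinuousLinearMap

open scoped InnerProductSpace

section PosNegPart

variable {Ω : Type*}

lemma posPart'_neg (s : Ω → ℝ) : posPart' (-s) = negPart' s := by
  ext j
  simp only [negPart', posPart', Pi.sub_apply, Pi.neg_apply]
  rcases le_total (s j) 0 with h | h <;> simp [h]

lemma negPart'_neg (s : Ω → ℝ) : negPart' (-s) = posPart' s := by
  rw [← posPart'_neg, neg_neg]

lemma posPart'_of_nonneg {s : Ω → ℝ} (hs : 0 ≤ s) : posPart' s = s := by
  ext j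
  exact max_eq_left (hs j)

lemma posPart'_sub_add_inf (c d : Ω → ℝ) : posPart' (c - d) + c ⊓ d = c := by
  ext j
  simp only [posPart', Pi.add_apply, Pi.sub_apply, Pi.inf_apply]
  rcases le_total (c j) (d j) with h | h
  · rw [max_eq_right (by linarith), min_eq_left h, zero_add]
  · rw [max_eq_left (by linarith), min_eq_right h, sub_add_cancel]

lemma negPart'_sub_add_inf (c d : Ω → ℝ) : negPart' (c - d) + c ⊓ d = d := by
  rw [negPart', sub_add_eq_add_sub, posPart'_sub_add_inf, sub_sub_cancel]

end PosNegPart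

structure IsPlusMinusClosed {Ω : Type*} (M : AddSubmonoid (Ω → ℝ)) : Prop where
  nonneg : ∀ s ∈ M, 0 ≤ s
  posPart'_sub_mem : ∀ a ∈ M, ∀ b ∈ M, posPart' (a - b) ∈ M

namespace IsPlusMinusClosed

variable {Ω : Type*} {M : AddSubmonoid (Ω → ℝ)} (hM : IsPlusMinusClosed M)
include hM

lemma negPart'_sub_mem {a b : Ω → ℝ} (ha : a ∈ M) (hb : b ∈ M) : negPart' (a - b) ∈ M := by
  rw [← posPart'_neg, neg_sub]
  exact hM.posPart'_sub_mem b hb a ha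

lemma inf_mem {c d : Ω → ℝ} (hc : c ∈ M) (hd : d ∈ M) : c ⊓ d ∈ M := by
  have hp := hM.posPart'_sub_mem c hc d hd
  have hcd : c ⊓ d = c - posPart' (c - d) := by
    rw [eq_sub_iff_add_eq, add_comm, posPart'_sub_add_inf]
  have := hM.posPart'_sub_mem c hc _ hp
  rwa [posPart'_of_nonneg (hcd ▸ le_inf (hM.nonneg c hc) (hM.nonneg d hd)), ← hcd] at this

end IsPlusMinusClosed

structure IsCoisometricSemigroup {𝕜 Ω H : Type*} [RCLike 𝕜] [NormedAddCommGroup H]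
    [InnerProductSpace 𝕜 H] [CompleteSpace H] (M : AddSubmonoid (Ω → ℝ))
    (T : (Ω → ℝ) → H →L[𝕜] H) : Prop where
  map_zero : T 0 = 1
  map_add : ∀ a ∈ M, ∀ b ∈ M, T (a + b) = T a ∘L T b
  norm_adjoint_apply : ∀ s ∈ M, ∀ x, ‖adjoint (T s) x‖ = ‖x‖

section Kernel

variable {𝕜 Ω H : Type*} [RCLike 𝕜] [NormedAddCommGroup H] [InnerProductSpace 𝕜 H]
  [CompleteSpace H] {M : AddSubmonoid (Ω → ℝ)} {T : (Ω → ℝ) → H →L[𝕜] H}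

lemma IsCoisometricSemigroup.comp_adjoint (hT : IsCoisometricSemigroup M T) {s : Ω → ℝ}
    (hs : s ∈ M) : T s ∘L adjoint (T s) = 1 := by
  simpa using (norm_map_iff_adjoint_comp_self _).1 (hT.norm_adjoint_apply s hs)

variable (M T) in
noncomputable def coisometryKernel : Matrix M M (H →L[𝕜] H) :=
  Matrix.of fun a b => T (negPart' (a - b : Ω → ℝ)) ∘L adjoint (T (posPart' (a - b : Ω → ℝ)))

lemma coisometryKernel_apply (a b : M) : coisometryKernel M T a b =
    T (negPart' (a - b : Ω → ℝ)) ∘L adjoint (T (posPart' (a - b : Ω → ℝ))) :=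
  rfl

variable (M T) in
lemma coisometryKernel_isHermitian : (coisometryKernel M T).IsHermitian := by
  refine Matrix.IsHermitian.ext fun a b => ?_
  simp only [coisometryKernel, Matrix.of_apply, star_eq_adjoint, adjoint_comp, adjoint_adjoint]
  rw [← neg_sub, posPart'_neg, negPart'_neg]

lemma coisometryKernel_add_add (a b r : M) :
    coisometryKernel M T (a + r) (b + r) = coisometryKernel M T a b := by
  simp only [coisometryKernel, Matrix.of_apply, AddSubmonoid.coe_add, add_sub_add_right_eq_sub]

variable (hM : IsPlusMinusClosed M) (hT : IsCoisometricSemigroup M T)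
include hM hT

lemma coisometryKernel_eq_of_add_eq {a b c d : M} (h : a + d = b + c) :
    coisometryKernel M T a b = T d ∘L adjoint (T c) := by
  have hab : (a - b : Ω → ℝ) = c - d := by
    rw [sub_eq_sub_iff_add_eq_add, ← AddSubmonoid.coe_add, ← AddSubmonoid.coe_add, h, add_comm]
  set e := (c : Ω → ℝ) ⊓ d
  set p := posPart' (c - d : Ω → ℝ)
  set n := negPart' (c - d : Ω → ℝ)
  have he : e ∈ M := hM.inf_mem c.2 d.2
  calc coisometryKernel M T a b = T n ∘L adjoint (T p) := by
        simp only [coisometryKernel, Matrix.of_apply, hab, n, p]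
    _ = T n ∘L (T e ∘L adjoint (T e)) ∘L adjoint (T p) := by
        rw [hT.comp_adjoint he, one_def, id_comp]
    _ = T (n + e) ∘L adjoint (T (p + e)) := by
        rw [hT.map_add _ (hM.negPart'_sub_mem c.2 d.2) _ he,
          hT.map_add _ (hM.posPart'_sub_mem c c.2 d d.2) _ he, adjoint_comp]
        rfl
    _ = T d ∘L adjoint (T c) := by rw [posPart'_sub_add_inf, negPart'_sub_add_inf]

lemma coisometryKernel_zero_left (a : M) : coisometryKernel M T 0 a = T a := by
  rw [coisometryKernel_eq_of_add_eq hM hT (c := 0) (d := a) (by rw [zero_add, add_zero]),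
    ZeroMemClass.coe_zero, hT.map_zero, adjoint_one, one_def, comp_id]

lemma coisometryKernel_comp_adjoint (u t s : M) :
    coisometryKernel M T u (t + s) ∘L adjoint (T s) = coisometryKernel M T u t := by
  rw [coisometryKernel_eq_of_add_eq hM hT (c := u) (d := t + s) (add_comm _ _),
    coisometryKernel_eq_of_add_eq hM hT (c := s + u) (d := t + s) (by abel),
    comp_assoc, ← adjoint_comp, ← hT.map_add _ s.2 _ u.2]
  rfl

theorem coisometryKernel_posSemidef : (coisometryKernel M T).PosSemidef := by
  classical
  have tfae := (RKHS.posSemidef_tfae (K := coisometryKernel M T)).out 2 0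
  refine tfae.1 ⟨coisometryKernel_isHermitian M T, fun f => ?_⟩
  set c : M → M := fun s => ∑ u ∈ f.support.erase s, u
  have hc : ∀ s ∈ f.support, s + c s = ∑ u ∈ f.support, u := fun s hs => by
    rw [add_comm, Finset.sum_erase_add _ _ hs]
  have hsum : (f.sum fun s x => f.sum fun t y => ⟪coisometryKernel M T t s x, y⟫_𝕜) =
      ⟪f.sum fun s x => adjoint (T (c s)) x, f.sum fun s x => adjoint (T (c s)) x⟫_𝕜 := by
    rw [Finsupp.sum_inner]
    refine Finsupp.sum_congr fun s hs => ?_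
    rw [Finsupp.inner_sum]
    refine Finsupp.sum_congr fun t ht => ?_
    rw [coisometryKernel_eq_of_add_eq hM hT ((hc t ht).trans (hc s hs).symm), comp_apply,
      ← adjoint_inner_right]
  rw [hsum]
  exact inner_self_nonneg

end Kernel

section IsometryExtension

variable {𝕜 E F ι : Type*} [RCLike 𝕜] [NormedAddCommGroup E] [InnerProductSpace 𝕜 E]
  [NormedAddCommGroup F] [InnerProductSpace 𝕜 F]

theorem LinearIsometry.exists_apply_eq_of_inner_eq [CompleteSpace F] {u : ι → E} {w : ι → F}
    (hu : (Submodule.span 𝕜 (Set.range u)).topologicalClosure = ⊤)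
    (h : ∀ i j, ⟪u i, u j⟫_𝕜 = ⟪w i, w j⟫_𝕜) :
    ∃ L : E →ₗᵢ[𝕜] F, ∀ i, L (u i) = w i := by
  set φ := Finsupp.linearCombination 𝕜 u
  set ψ := Finsupp.linearCombination 𝕜 w
  have hφ : DenseRange φ := by
    rw [DenseRange, ← LinearMap.coe_range, Finsupp.range_linearCombination,
      Submodule.dense_iff_topologicalClosure_eq_top, hu]
  have hnorm : ∀ a, ‖ψ a‖ = ‖φ a‖ := fun a => by
    have : ⟪ψ a, ψ a⟫_𝕜 = ⟪φ a, φ a⟫_𝕜 := by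
      simp only [φ, ψ, Finsupp.linearCombination_apply, Finsupp.sum_inner, Finsupp.inner_sum,
        inner_smul_left, inner_smul_right, h]
    rw [@norm_eq_sqrt_re_inner 𝕜, this, ← @norm_eq_sqrt_re_inner 𝕜]
  have hLφ : ∀ a, ψ.extendOfNorm φ (φ a) = ψ a :=
    LinearMap.extendOfNorm_eq hφ ⟨1, fun a => by rw [hnorm, one_mul]⟩
  refine ⟨⟨(ψ.extendOfNorm φ).toLinearMap, fun x => ?_⟩, fun i => ?_⟩
  · exact hφ.induction_on x (isClosed_eq (by fun_prop) continuous_norm)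
      fun a => by rw [ContinuousLinearMap.coe_coe, hLφ, hnorm]
  · simpa [φ, ψ] using hLφ (Finsupp.single i 1)

end IsometryExtension

lemma LinearIsometry.surjective_of_subset_range {𝕜 E F : Type*} [NormedField 𝕜]
    [SeminormedAddCommGroup E] [NormedSpace 𝕜 E] [CompleteSpace E]
    [NormedAddCommGroup F] [NormedSpace 𝕜 F] (L : E →ₗᵢ[𝕜] F) {s : Set F}
    (hs : (Submodule.span 𝕜 s).topologicalClosure = ⊤) (hL : s ⊆ Set.range L) :
    Function.Surjective L := by
  have hclosed : IsClosed (Set.range L) := L.isometry.isUniformInducing.isComplete_range.isClosed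
  have hspan : (Submodule.span 𝕜 s : Set F) ⊆ Set.range L := by
    have hrange : Set.range L = LinearMap.range L.toLinearMap :=
      (LinearMap.coe_range L.toLinearMap).symm
    rw [hrange] at hL ⊢
    exact Submodule.span_le.2 hL
  rw [← Set.range_eq_univ]
  refine Set.eq_univ_of_univ_subset ?_
  rw [← Submodule.top_coe (R := 𝕜), ← hs, Submodule.topologicalClosure_coe]
  exact closure_minimal hspan hclosed

lemma LinearIsometry.mem_unitary_of_surjective {𝕜 E : Type*} [RCLike 𝕜] [NormedAddCommGroup E]
    [InnerProductSpace 𝕜 E] [CompleteSpace E] (L : E →ₗᵢ[𝕜] E) (hL : Function.Surjective L) :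
    L.toContinuousLinearMap ∈ unitary (E →L[𝕜] E) :=
  (Unitary.linearIsometryEquiv.symm (LinearIsometryEquiv.ofSurjective L hL)).prop

structure IsUnitarySemigroup {𝕜 Ω K : Type*} [RCLike 𝕜] [NormedAddCommGroup K]
    [InnerProductSpace 𝕜 K] [CompleteSpace K] (M : AddSubmonoid (Ω → ℝ))
    (U : (Ω → ℝ) → K →L[𝕜] K) : Prop where
  map_zero : U 0 = 1
  map_add : ∀ a ∈ M, ∀ b ∈ M, U (a + b) = U a ∘L U b
  mem_unitary : ∀ s ∈ M, U s ∈ unitary (K →L[𝕜] K)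

namespace IsUnitarySemigroup

variable {𝕜 Ω K : Type*} [RCLike 𝕜] [NormedAddCommGroup K] [InnerProductSpace 𝕜 K]
  [CompleteSpace K] {M : AddSubmonoid (Ω → ℝ)} {U : (Ω → ℝ) → K →L[𝕜] K}
  (hU : IsUnitarySemigroup M U)
include hU

lemma adjoint_apply_apply {s : Ω → ℝ} (hs : s ∈ M) (x : K) : adjoint (U s) (U s x) = x :=
  congr($((Unitary.mem_iff.1 (hU.mem_unitary s hs)).1) x)

lemma inner_map_map_of_add_eq {s t α β : Ω → ℝ} (hs : s ∈ M) (ht : t ∈ M) (hα : α ∈ M)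
    (hβ : β ∈ M) (h : s + β = t + α) (x y : K) :
    ⟪U s x, U t y⟫_𝕜 = ⟪U α x, U β y⟫_𝕜 := by
  have hmap {a b : Ω → ℝ} (ha : a ∈ M) (hb : b ∈ M) (z : K) : U (a + b) z = U a (U b z) := by
    rw [hU.map_add a ha b hb, comp_apply]
  calc ⟪U s x, U t y⟫_𝕜 = ⟪U β (U s x), U β (U t y)⟫_𝕜 :=
        (inner_map_map_of_mem_unitary (hU.mem_unitary β hβ) _ _).symm
    _ = ⟪U (t + α) x, U (t + β) y⟫_𝕜 := by
        rw [← hmap hβ hs, ← hmap hβ ht, add_comm β s, h, add_comm β t]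
    _ = ⟪U α x, U β y⟫_𝕜 := by
        rw [hmap ht hα, hmap ht hβ, inner_map_map_of_mem_unitary (hU.mem_unitary t ht)]

lemma adjoint_comp_comm {a b : Ω → ℝ} (ha : a ∈ M) (hb : b ∈ M) :
    adjoint (U a) ∘L U b = U b ∘L adjoint (U a) := by
  have hcomm : Commute (U a) (U b) := by
    rw [commute_iff_eq, mul_def, mul_def, ← hU.map_add a ha b hb, ← hU.map_add b hb a ha,
      add_comm]
  have hconj := (commute_unitary_iff_star_left_conjugate (hU.mem_unitary a ha)).1 hcomm
  rw [← star_eq_adjoint, ← mul_def, ← mul_def]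
  calc star (U a) * U b = star (U a) * U b * (U a * star (U a)) := by
        rw [Unitary.mul_star_self_of_mem (hU.mem_unitary a ha), mul_one]
    _ = U b * star (U a) := by rw [← mul_assoc, hconj]

end IsUnitarySemigroup

lemma setOf_exists_mem_eq_range {A S B X : Type*} [SetLike S A] (M : S) (f : A → B → X) :
    {x | ∃ s ∈ M, ∃ b, x = f s b} = Set.range fun p : M × B => f p.1 p.2 := by
  ext x
  simp [eq_comm]

section Dilation

variable {𝕜 Ω H K : Type*} [RCLike 𝕜] [NormedAddCommGroup H] [InnerProductSpace 𝕜 H]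
  [CompleteSpace H] [NormedAddCommGroup K] [InnerProductSpace 𝕜 K] [CompleteSpace K]
  {M : AddSubmonoid (Ω → ℝ)} {T : (Ω → ℝ) → H →L[𝕜] H}

variable (M T) in
/-- `adjoint ι ∘L A ∘L ι` is the compression `P_H A|_H`, and `coisometryKernel M U a b` is
`U_{s₋} U_{s₊}*` for `s = a - b`. -/
def IsDilation (ι : H →L[𝕜] K) (U : (Ω → ℝ) → K →L[𝕜] K) : Prop :=
  ∀ a b : M, adjoint ι ∘L coisometryKernel M U a b ∘L ι = coisometryKernel M T a b

lemma inner_apply_apply_of_isDilation (hM : IsPlusMinusClosed M) {ι : H →L[𝕜] K}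
    {U : (Ω → ℝ) → K →L[𝕜] K} (hU : IsUnitarySemigroup M U) (hd : IsDilation M T ι U)
    (s t : M) (x y : H) :
    ⟪U s (ι x), U t (ι y)⟫_𝕜 = ⟪coisometryKernel M T t s x, y⟫_𝕜 := by
  set p := posPart' (t - s : Ω → ℝ)
  set n := negPart' (t - s : Ω → ℝ)
  have hp : p ∈ M := hM.posPart'_sub_mem t t.2 s s.2
  have hn : n ∈ M := hM.negPart'_sub_mem t.2 s.2
  have hsum : (s : Ω → ℝ) + p = t + n := by simp only [n, negPart']; abel
  calc ⟪U s (ι x), U t (ι y)⟫_𝕜 = ⟪U n (ι x), U p (ι y)⟫_𝕜 :=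
        hU.inner_map_map_of_add_eq s.2 t.2 hn hp hsum _ _
    _ = ⟪(adjoint (U p) ∘L U n) (ι x), ι y⟫_𝕜 := (adjoint_inner_left _ _ _).symm
    _ = ⟪(adjoint ι ∘L coisometryKernel M U t s ∘L ι) x, y⟫_𝕜 := by
        rw [hU.adjoint_comp_comm hp hn, comp_apply, comp_apply, adjoint_inner_left]
        rfl
    _ = ⟪coisometryKernel M T t s x, y⟫_𝕜 := by rw [hd t s]

theorem exists_linearIsometryEquiv_of_isDilation {K' : Type*} [NormedAddCommGroup K']
    [InnerProductSpace 𝕜 K'] [CompleteSpace K'] (hM : IsPlusMinusClosed M)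
    {ι : H →L[𝕜] K} {U : (Ω → ℝ) → K →L[𝕜] K} {ι' : H →L[𝕜] K'} {U' : (Ω → ℝ) → K' →L[𝕜] K'}
    (hU : IsUnitarySemigroup M U) (hU' : IsUnitarySemigroup M U')
    (hd : IsDilation M T ι U) (hd' : IsDilation M T ι' U')
    (hmin : (Submodule.span 𝕜 {x | ∃ s ∈ M, ∃ h, x = U s (ι h)}).topologicalClosure = ⊤)
    (hmin' : (Submodule.span 𝕜 {x | ∃ s ∈ M, ∃ h, x = U' s (ι' h)}).topologicalClosure = ⊤) :
    ∃ W : K ≃ₗᵢ[𝕜] K', (∀ h, W (ι h) = ι' h) ∧ ∀ s ∈ M, ∀ x, W (U s x) = U' s (W x) := by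
  obtain ⟨L, hL⟩ := LinearIsometry.exists_apply_eq_of_inner_eq
    (u := fun p : M × H => U p.1 (ι p.2)) (w := fun p => U' p.1 (ι' p.2))
    (by rwa [← setOf_exists_mem_eq_range M fun s h => U s (ι h)]) fun p q => by
      simp only [inner_apply_apply_of_isDilation hM hU hd,
        inner_apply_apply_of_isDilation hM hU' hd']
  have hsurj : Function.Surjective L := L.surjective_of_subset_range hmin' <| by
    rintro _ ⟨s, hs, h, rfl⟩
    exact ⟨_, hL (⟨s, hs⟩, h)⟩
  refine ⟨LinearIsometryEquiv.ofSurjective L hsurj, fun h => ?_, fun s hs => ?_⟩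
  · simpa [hU.map_zero, hU'.map_zero] using hL (0, h)
  have hdense := (Submodule.dense_iff_topologicalClosure_eq_top).2 hmin
  have hcomm : L.toContinuousLinearMap ∘L U s = U' s ∘L L.toContinuousLinearMap := by
    refine ContinuousLinearMap.ext_on hdense ?_
    rintro _ ⟨t, ht, h, rfl⟩
    have := hL (⟨s + t, M.add_mem hs ht⟩, h)
    simp only [hU.map_add s hs t ht, hU'.map_add s hs t ht, comp_apply] at this
    simp [this, ← hL (⟨t, ht⟩, h)]
  exact fun x => congr($hcomm x)

end Dilation

namespace coisometryKernel

variable {𝕜 Ω H : Type*} [RCLike 𝕜] [NormedAddCommGroup H] [InnerProductSpace 𝕜 H]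
  [CompleteSpace H] (M : AddSubmonoid (Ω → ℝ)) (T : (Ω → ℝ) → H →L[𝕜] H)
  [Fact (coisometryKernel M T).PosSemidef]

local notation "𝒦" => RKHS.OfKernel (coisometryKernel M T)
local notation "κ" => RKHS.kerFun (RKHS.OfKernel (coisometryKernel M T))

lemma inner_kerFun_kerFun (s t : M) (x y : H) :
    ⟪κ s x, κ t y⟫_𝕜 = ⟪coisometryKernel M T t s x, y⟫_𝕜 := by
  rw [← RKHS.kernel_inner, RKHS.OfKernel.kernel_ofKernel]

lemma span_kerFun_dense :
    (Submodule.span 𝕜 (Set.range fun p : M × H => κ p.1 p.2)).topologicalClosure = ⊤ := by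
  have hrange : (Set.range fun p : M × H => κ p.1 p.2) = {z | ∃ s x, κ s x = z} := by
    ext
    simp
  rw [hrange]
  exact RKHS.kerFun_dense 𝒦

lemma ext_kerFun {E : Type*} [NormedAddCommGroup E] [NormedSpace 𝕜 E] {A B : 𝒦 →L[𝕜] E}
    (h : ∀ s x, A (κ s x) = B (κ s x)) : A = B :=
  ContinuousLinearMap.ext_on ((Submodule.dense_iff_topologicalClosure_eq_top).2
    (span_kerFun_dense M T)) (by rintro _ ⟨p, rfl⟩; exact h p.1 p.2)

lemma exists_linearIsometry_kerFun_add (r : M) :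
    ∃ L : 𝒦 →ₗᵢ[𝕜] 𝒦, ∀ s x, L (κ s x) = κ (s + r) x := by
  obtain ⟨L, hL⟩ := LinearIsometry.exists_apply_eq_of_inner_eq
    (w := fun p : M × H => κ (p.1 + r) p.2) (span_kerFun_dense M T) fun p q => by
      simp only [inner_kerFun_kerFun, coisometryKernel_add_add]
  exact ⟨L, fun s x => hL (s, x)⟩

noncomputable def kernelShift (r : M) : 𝒦 →ₗᵢ[𝕜] 𝒦 :=
  (exists_linearIsometry_kerFun_add M T r).choose

lemma kernelShift_kerFun (r s : M) (x : H) : kernelShift M T r (κ s x) = κ (s + r) x :=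
  (exists_linearIsometry_kerFun_add M T r).choose_spec s x

open scoped Classical in
noncomputable def shiftDilation (r : Ω → ℝ) : 𝒦 →L[𝕜] 𝒦 :=
  if h : r ∈ M then (kernelShift M T ⟨r, h⟩).toContinuousLinearMap else 1

lemma shiftDilation_kerFun (r s : M) (x : H) : shiftDilation M T r (κ s x) = κ (s + r) x := by
  simp [shiftDilation, kernelShift_kerFun M T r s x]

lemma span_shiftDilation_dense :
    (Submodule.span 𝕜 {z | ∃ s ∈ M, ∃ h, z = shiftDilation M T s (κ 0 h)}).topologicalClosure
      = ⊤ := by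
  rw [setOf_exists_mem_eq_range M fun s h => shiftDilation M T s (κ 0 h)]
  simpa only [shiftDilation_kerFun, zero_add] using span_kerFun_dense M T

variable {M T} (hM : IsPlusMinusClosed M) (hT : IsCoisometricSemigroup M T)
include hM hT

lemma norm_kerFun_zero (x : H) : ‖κ 0 x‖ = ‖x‖ := by
  rw [@norm_eq_sqrt_re_inner 𝕜, inner_kerFun_kerFun, coisometryKernel_zero_left hM hT,
    ZeroMemClass.coe_zero, hT.map_zero, one_apply_eq_self, ← @norm_eq_sqrt_re_inner 𝕜]

lemma kerFun_add_adjoint (t s : M) (x : H) : κ (t + s) (adjoint (T s) x) = κ t x :=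
  RKHS.ext fun u => by
    rw [RKHS.kerFun_apply, RKHS.kerFun_apply, RKHS.OfKernel.kernel_ofKernel,
      ← coisometryKernel_comp_adjoint hM hT u t s, comp_apply]

theorem isUnitarySemigroup_shiftDilation : IsUnitarySemigroup M (shiftDilation M T) where
  map_zero := ext_kerFun M T fun s x => by
    simpa using shiftDilation_kerFun M T 0 s x
  map_add a ha b hb := ext_kerFun M T fun s x => by
    rw [comp_apply, shiftDilation_kerFun M T ⟨b, hb⟩, shiftDilation_kerFun M T ⟨a, ha⟩,
      add_assoc, show (⟨b, hb⟩ + ⟨a, ha⟩ : M) = ⟨a + b, M.add_mem ha hb⟩ from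
        Subtype.ext (add_comm b a)]
    exact shiftDilation_kerFun M T ⟨a + b, M.add_mem ha hb⟩ s x
  mem_unitary r hr := by
    rw [shiftDilation, dif_pos hr]
    refine LinearIsometry.mem_unitary_of_surjective _ <|
      LinearIsometry.surjective_of_subset_range _ (span_kerFun_dense M T) ?_
    rintro _ ⟨⟨s, x⟩, rfl⟩
    exact ⟨κ s (adjoint (T r) x), by
      rw [kernelShift_kerFun, kerFun_add_adjoint hM hT s ⟨r, hr⟩ x]⟩

lemma adjoint_shiftDilation_kerFun_zero {p : Ω → ℝ} (hp : p ∈ M) (x : H) :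
    adjoint (shiftDilation M T p) (κ 0 x) = κ 0 (adjoint (T p) x) := by
  rw [← kerFun_add_adjoint hM hT 0 ⟨p, hp⟩ x, ← shiftDilation_kerFun M T ⟨p, hp⟩,
    (isUnitarySemigroup_shiftDilation hM hT).adjoint_apply_apply hp]

lemma adjoint_kerFun_zero_shiftDilation {n : Ω → ℝ} (hn : n ∈ M) (x : H) :
    adjoint (κ 0) (shiftDilation M T n (κ 0 x)) = T n x := by
  rw [shiftDilation_kerFun M T ⟨n, hn⟩, RKHS.adjoint_kerFun, RKHS.kerFun_apply,
    RKHS.OfKernel.kernel_ofKernel, zero_add, coisometryKernel_zero_left hM hT]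

theorem isDilation_shiftDilation : IsDilation M T (κ 0) (shiftDilation M T) := fun a b => by
  ext x
  rw [coisometryKernel_apply, coisometryKernel_apply, comp_apply, comp_apply, comp_apply,
    adjoint_shiftDilation_kerFun_zero hM hT (hM.posPart'_sub_mem a a.2 b b.2),
    adjoint_kerFun_zero_shiftDilation hM hT (hM.negPart'_sub_mem a.2 b.2), comp_apply]

end coisometryKernel

/-- **Unitary dilation of a multiparameter semigroup of coisometries.**
A semigroup of coisometries over a `+,-`-closed unital subsemigroup `Sig ⊆ ℝ₊^Ω`
admits a unitary dilation `U` on `K ⊇ H` with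
`P_H U_{s₋} U_{s₊}* |_H = T_{s₋} T_{s₊}*` for all `s ∈ Sig − Sig`, with
`K = ⋁_{s ∈ Sig} U_s H`; such a dilation is unique up to unitary equivalence
fixing `H`. -/
theorem coisometric_semigroup_has_unique_minimal_unitary_dilation
    {Ω : Type} {H : Type} [NormedAddCommGroup H] [InnerProductSpace ℂ H]
    [CompleteSpace H]
    (Sig : Set (Ω → ℝ))
    (hnn : ∀ s ∈ Sig, ∀ j : Ω, 0 ≤ s j)
    (h0 : (0 : Ω → ℝ) ∈ Sig)
    (hadd : ∀ a ∈ Sig, ∀ b ∈ Sig, a + b ∈ Sig)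
    (hpm : ∀ a ∈ Sig, ∀ b ∈ Sig, posPart' (a - b) ∈ Sig ∧ negPart' (a - b) ∈ Sig)
    -- `T` is a semigroup of coisometries on `H` over `Sig`
    (T : (Ω → ℝ) → H →L[ℂ] H)
    (hT0 : T 0 = 1)
    (hTsg : ∀ a ∈ Sig, ∀ b ∈ Sig, T (a + b) = T a ∘L T b)
    (hTcoiso : ∀ s ∈ Sig, ∀ x : H, ‖adjoint (T s) x‖ = ‖x‖) :
    ∃ (K : Type) (_ : NormedAddCommGroup K) (_ : InnerProductSpace ℂ K)
      (_ : CompleteSpace K) (ι : H →L[ℂ] K) (U : (Ω → ℝ) → K →L[ℂ] K),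
      -- `ι` is an isometric embedding of `H` into `K`
      (∀ h : H, ‖ι h‖ = ‖h‖) ∧
      -- `U` is a semigroup of unitaries over `Sig`
      U 0 = 1 ∧
      (∀ a ∈ Sig, ∀ b ∈ Sig, U (a + b) = U a ∘L U b) ∧
      (∀ s ∈ Sig, U s ∘L adjoint (U s) = 1 ∧ adjoint (U s) ∘L U s = 1) ∧
      -- (1) for all `s = a - b ∈ Sig − Sig`, `P_H U_{s₋} U_{s₊}* |_H = T_{s₋} T_{s₊}*`
      (∀ a ∈ Sig, ∀ b ∈ Sig,
        adjoint ι ∘L (U (negPart' (a - b)) ∘L adjoint (U (posPart' (a - b)))) ∘L ι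
          = T (negPart' (a - b)) ∘L adjoint (T (posPart' (a - b)))) ∧
      -- (2) `K = ⋁_{s ∈ Sig} U_s H`
      (Submodule.span ℂ
        {x : K | ∃ s ∈ Sig, ∃ h : H, x = U s (ι h)}).topologicalClosure = ⊤ ∧
      -- uniqueness up to a unitary equivalence fixing `H`
      (∀ (K' : Type) (_ : NormedAddCommGroup K') (_ : InnerProductSpace ℂ K')
          (_ : CompleteSpace K') (ι' : H →L[ℂ] K') (U' : (Ω → ℝ) → K' →L[ℂ] K'),
        (∀ h : H, ‖ι' h‖ = ‖h‖) →
        U' 0 = 1 →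
        (∀ a ∈ Sig, ∀ b ∈ Sig, U' (a + b) = U' a ∘L U' b) →
        (∀ s ∈ Sig, U' s ∘L adjoint (U' s) = 1 ∧ adjoint (U' s) ∘L U' s = 1) →
        (∀ a ∈ Sig, ∀ b ∈ Sig,
          adjoint ι' ∘L (U' (negPart' (a - b)) ∘L adjoint (U' (posPart' (a - b)))) ∘L ι'
            = T (negPart' (a - b)) ∘L adjoint (T (posPart' (a - b)))) →
        (Submodule.span ℂ
          {x : K' | ∃ s ∈ Sig, ∃ h : H, x = U' s (ι' h)}).topologicalClosure = ⊤ →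
        ∃ W : K ≃ₗᵢ[ℂ] K',
          (∀ h : H, W (ι h) = ι' h) ∧ ∀ s ∈ Sig, ∀ x : K, W (U s x) = U' s (W x)) := by
  let M : AddSubmonoid (Ω → ℝ) :=
    { carrier := Sig, add_mem' := fun ha hb => hadd _ ha _ hb, zero_mem' := h0 }
  have hM : IsPlusMinusClosed M := ⟨hnn, fun a ha b hb => (hpm a ha b hb).1⟩
  have hT : IsCoisometricSemigroup M T := ⟨hT0, hTsg, hTcoiso⟩
  have : Fact (coisometryKernel M T).PosSemidef := ⟨coisometryKernel_posSemidef hM hT⟩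
  have hU := coisometryKernel.isUnitarySemigroup_shiftDilation hM hT
  have hd := coisometryKernel.isDilation_shiftDilation hM hT
  have hmin := coisometryKernel.span_shiftDilation_dense M T
  refine ⟨_, inferInstance, inferInstance, inferInstance, _, coisometryKernel.shiftDilation M T,
    coisometryKernel.norm_kerFun_zero hM hT, hU.map_zero, hU.map_add,
    fun s hs => (Unitary.mem_iff.1 (hU.mem_unitary s hs)).symm,
    fun a ha b hb => hd ⟨a, ha⟩ ⟨b, hb⟩, hmin, ?_⟩
  intro K' _ _ _ ι' U' _ hU'0 hU'add hU'unit hd' hmin'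
  exact exists_linearIsometryEquiv_of_isDilation hM hU
    ⟨hU'0, hU'add, fun s hs => Unitary.mem_iff.2 (hU'unit s hs).symm⟩ hd
    (fun a b => hd' a a.2 b b.2) hmin hmin'
end

section
/- Let K be a complex Hilbert space, H a closed subspace of K, V an isometry of H into H, and U a unitary operator on K such that P_H U|_H = V (where P_H is the orthogonal projection of K onto H). Then U h = V h for every h ∈ H; that is, any unitary dilation of an isometry is an extension of it. -/
open ContinuousLinearMap

/-!
By Pythagoras, `‖U h‖² = ‖P_H U h‖² + ‖P_{H^⊥} U h‖²`. Since `U` is an isometry and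
`P_H U h = V h` with `V` an isometry, the first two terms both equal `‖h‖²`, so the component
of `U h` orthogonal to `H` vanishes and `U h = P_H U h = V h`.
-/

theorem Submodule.coe_orthogonalProjectionOnto_eq_self_of_norm_eq
    {𝕜 E : Type*} [RCLike 𝕜] [NormedAddCommGroup E] [InnerProductSpace 𝕜 E]
    {H : Submodule 𝕜 E} [H.HasOrthogonalProjection] {x : E}
    (hx : ‖H.orthogonalProjectionOnto x‖ = ‖x‖) :
    (H.orthogonalProjectionOnto x : E) = x :=
  H.starProjection_eq_self_iff.2 <| (H.mem_iff_norm_starProjection x).2 hx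

theorem unitary_dilation_of_isometry_is_extension_general
    {K : Type} [NormedAddCommGroup K] [InnerProductSpace ℂ K] [CompleteSpace K]
    (H : Submodule ℂ K) [CompleteSpace H]
    (V : H →L[ℂ] H) (hV : ∀ h : H, ‖V h‖ = ‖h‖)
    (U : K →L[ℂ] K)
    (hU₂ : adjoint U ∘L U = 1)
    (hdil : ∀ h : H, H.orthogonalProjectionOnto (U h) = V h) :
    ∀ h : H, U h = (V h : K) := by
  intro h
  have hU : ‖U h‖ = ‖h‖ := (norm_map_iff_adjoint_comp_self U).2 hU₂ h
  have hnorm : ‖H.orthogonalProjectionOnto (U h)‖ = ‖U h‖ := by rw [hdil, hV, hU]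
  rw [← Submodule.coe_orthogonalProjectionOnto_eq_self_of_norm_eq hnorm, hdil]

/-- **A unitary dilation of an isometry is an extension.**
If `H` is a closed subspace of a Hilbert space `K`, `V` is an isometry of `H` into
`H`, and `U` is a unitary on `K` with `P_H U|_H = V`, then `U h = V h` for all
`h ∈ H`. -/
theorem unitary_dilation_of_isometry_is_extension
    {K : Type} [NormedAddCommGroup K] [InnerProductSpace ℂ K] [CompleteSpace K]
    (H : Submodule ℂ K) [CompleteSpace H]
    (V : H →L[ℂ] H) (hV : ∀ h : H, ‖V h‖ = ‖h‖)
    (U : K →L[ℂ] K)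
    (hU₁ : U ∘L adjoint U = 1) (hU₂ : adjoint U ∘L U = 1)
    (hdil : ∀ h : H, H.orthogonalProjectionOnto (U h) = V h) :
    ∀ h : H, U h = (V h : K) :=
  unitary_dilation_of_isometry_is_extension_general H V hV U hU₂ hdil
end
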